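/- arXiv:1611.08757 — 9 statements merged into one kernel-verified Lean document; each statement's English description precedes it below -/
import Mathlib

section
/- Let n ≥ 1, let a ∈ [0,1]^n, let k ≥ 1 be an integer, and let ρ be a real number with 0 < ρ ≤ k+1. Set δ := n·(ρ/(k+1))^{n−1} and K := {x ∈ ℝ^n : ‖x‖∞ < (k+1)/ρ and |⟨a,x⟩| ≤ δ}. Then vol_n(K) ≥ 2^n. -/
open MeasureTheory Set

/-!
For `a ≥ 0`, at least the fraction `min 1 (t / (Δ ∑ aᵢ))` of the cube `(-Δ, Δ)ⁿ` lies in the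
slab `|⟨a, x⟩| < t`. With `t = n Δ^{1-n}` and `∑ aᵢ ≤ n` this fraction is `Δ⁻ⁿ`, which turns
the volume `(2Δ)ⁿ` of the cube into `2ⁿ`.

The fraction bound is proved by induction on `n`, slicing off the first coordinate `x₀` with
coefficient `b > 0`. When the remaining coordinates satisfy `|∑ aᵢ xᵢ| = s`, the admissible `x₀`
form an interval of length at least `(bΔ + t - max |bΔ - t| s) / b`, so the volume is at least
`b⁻¹` times the integral over `r ∈ (|bΔ - t|, bΔ + t]` of the volume of the slab
`|∑ aᵢ xᵢ| < r` in the remaining coordinates. Integrating the inductive bound for these slabs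
in closed form gives the required bound.
-/

theorem integral_min_one_div {D e q : ℝ} (hD : 0 < D) (heq : e ≤ q) :
    ∫ r in e..q, min 1 (r / D) =
      ((max e (min q D)) ^ 2 - e ^ 2) / (2 * D) + (q - max e (min q D)) := by
  set m := max e (min q D)
  have hem : e ≤ m := le_max_left _ _
  have hmq : m ≤ q := max_le heq (min_le_left _ _)
  have hcont : Continuous fun r : ℝ => min 1 (r / D) := by fun_prop
  rw [← intervalIntegral.integral_add_adjacent_intervals (hcont.intervalIntegrable e m)
    (hcont.intervalIntegrable m q)]
  have hlow : ∫ r in e..m, min 1 (r / D) = ∫ r in e..m, r / D := by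
    refine intervalIntegral.integral_congr_ae (Filter.Eventually.of_forall fun r hr => ?_)
    rw [uIoc_of_le hem] at hr
    refine min_eq_right ((div_le_one hD).2 ?_)
    rcases max_cases e (min q D) with ⟨h, -⟩ | ⟨h, -⟩
    · linarith [hr.1, hr.2]
    · linarith [hr.2, min_le_right q D]
  have hhigh : ∫ r in m..q, min 1 (r / D) = ∫ r in m..q, (1 : ℝ) := by
    refine intervalIntegral.integral_congr_ae (Filter.Eventually.of_forall fun r hr => ?_)
    rw [uIoc_of_le hmq] at hr
    refine min_eq_left ((one_le_div hD).2 ?_)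
    rcases min_cases q D with ⟨h, -⟩ | ⟨h, -⟩
    · linarith [hr.1, hr.2, le_max_right e (min q D)]
    · linarith [hr.1, le_max_right e (min q D)]
  rw [hlow, hhigh, intervalIntegral.integral_div, integral_id, intervalIntegral.integral_const,
    smul_eq_mul, mul_one]
  ring

theorem two_mul_min_le_integral_min_one_div {c D t : ℝ} (hc : 0 ≤ c) (hD : 0 < D)
    (ht : 0 ≤ t) :
    2 * c * min 1 (t / (D + c)) ≤ ∫ r in |c - t|..c + t, min 1 (r / D) := by
  rw [integral_min_one_div hD (abs_sub_le_iff.2 ⟨by linarith, by linarith⟩)]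
  have hE : 0 < D + c := by linarith
  have h1 : 2 * c * min 1 (t / (D + c)) ≤ 2 * c :=
    mul_le_of_le_one_right (by linarith) (min_le_left _ _)
  have h2 : 2 * c * min 1 (t / (D + c)) ≤ 2 * c * t / (D + c) := by
    rw [mul_div_assoc]; exact mul_le_mul_of_nonneg_left (min_le_right _ _) (by linarith)
  refine (le_min h1 h2).trans ?_
  rcases max_cases |c - t| (min (c + t) D) with ⟨hm, -⟩ | ⟨hm, hlt⟩ <;> rw [hm]
  · rw [sub_self, zero_div, zero_add]
    rcases abs_cases (c - t) with ⟨he, -⟩ | ⟨he, -⟩ <;> rw [he]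
    · refine (min_le_right _ _).trans ((div_le_iff₀ hE).2 ?_)
      nlinarith
    · linarith [min_le_left (2 * c) (2 * c * t / (D + c))]
  · refine (min_le_right _ _).trans ?_
    rw [sq_abs]
    rcases min_cases (c + t) D with ⟨hq, -⟩ | ⟨hq, hDq⟩ <;> rw [hq] at hlt ⊢
    · rw [sub_self, add_zero, div_le_div_iff₀ hE (by positivity)]
      nlinarith [mul_nonneg (mul_nonneg hc ht) hD.le, mul_nonneg (mul_nonneg hc ht) hc]
    · obtain ⟨hct₁, hct₂⟩ := abs_lt.1 hlt
      -- `4c²t - (c + t - D)²(D + c)` factors as this product.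
      have key : 0 ≤ (D + c - t) * ((D + c) * t - (D - c) ^ 2) := by
        apply mul_nonneg <;> nlinarith
      rw [show (D ^ 2 - (c - t) ^ 2) / (2 * D) + (c + t - D)
          = (4 * c * t - (c + t - D) ^ 2) / (2 * D) by field_simp; ring,
        div_le_div_iff₀ hE (by positivity)]
      nlinarith

theorem volume_eq_lintegral_volume_cons {n : ℕ} {A : Set (Fin (n + 1) → ℝ)}
    (hA : MeasurableSet A) :
    volume A = ∫⁻ x : Fin n → ℝ, volume {y : ℝ | Fin.cons y x ∈ A} := by
  have e := (volume_preserving_piFinSuccAbove (fun _ : Fin (n + 1) => ℝ) 0).symm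
  rw [← e.measure_preimage hA.nullMeasurableSet, Measure.volume_eq_prod,
    Measure.prod_apply_symm (hA.preimage e.measurable)]
  simp only [preimage, MeasurableEquiv.piFinSuccAbove_symm_apply, Fin.insertNthEquiv,
    Equiv.coe_fn_mk, Fin.insertNth_zero', mem_ofPred_eq]

theorem ofReal_inv_mul_volume_Ioc_le_volume_slab {b Δ t s : ℝ} (hb : 0 < b) :
    ENNReal.ofReal b⁻¹ * volume (Ioc (max |b * Δ - t| |s|) (b * Δ + t)) ≤
      volume {y : ℝ | |y| < Δ ∧ |b * y + s| < t} := by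
  have hsub : Ioo (max (-Δ) ((-t - s) / b)) (min Δ ((t - s) / b)) ⊆
      {y : ℝ | |y| < Δ ∧ |b * y + s| < t} := by
    rintro y ⟨hlo, hhi⟩
    rw [max_lt_iff, div_lt_iff₀ hb] at hlo
    rw [lt_min_iff, lt_div_iff₀ hb] at hhi
    exact ⟨abs_lt.2 ⟨hlo.1, hhi.1⟩, abs_lt.2 ⟨by linarith, by linarith⟩⟩
  refine le_trans ?_ (measure_mono hsub)
  rw [Real.volume_Ioc, Real.volume_Ioo, ← ENNReal.ofReal_mul (inv_nonneg.2 hb.le)]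
  refine ENNReal.ofReal_le_ofReal ?_
  rw [inv_mul_le_iff₀ hb, mul_sub, mul_min_of_nonneg _ _ hb.le, mul_max_of_nonneg _ _ hb.le,
    mul_div_cancel₀ _ hb.ne', mul_div_cancel₀ _ hb.ne']
  rcases abs_cases (b * Δ - t) with h | h <;> rcases abs_cases s with h' | h' <;>
    simp only [max_def, min_def] <;> split_ifs <;> linarith

def cubeSlab {n : ℕ} (a : Fin n → ℝ) (Δ t : ℝ) : Set (Fin n → ℝ) :=
  {x | (∀ i, |x i| < Δ) ∧ |∑ i, a i * x i| < t}

theorem measurableSet_cubeSlab {n : ℕ} (a : Fin n → ℝ) (Δ t : ℝ) :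
    MeasurableSet (cubeSlab a Δ t) := by
  unfold cubeSlab
  measurability

theorem cons_mem_cubeSlab {n : ℕ} {b y Δ t : ℝ} {a x : Fin n → ℝ} :
    Fin.cons y x ∈ cubeSlab (Fin.cons b a) Δ t ↔
      (|y| < Δ ∧ ∀ i, |x i| < Δ) ∧ |b * y + ∑ i, a i * x i| < t := by
  simp [cubeSlab, Fin.forall_fin_succ, Fin.sum_univ_succ]

theorem volume_cubeSlab_cons_zero {n : ℕ} (a : Fin n → ℝ) (Δ t : ℝ) :
    volume (cubeSlab (Fin.cons 0 a) Δ t) =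
      ENNReal.ofReal (2 * Δ) * volume (cubeSlab a Δ t) := by
  rw [volume_eq_lintegral_volume_cons (measurableSet_cubeSlab _ _ _),
    ← lintegral_indicator_const (measurableSet_cubeSlab _ _ _)]
  refine lintegral_congr fun x => ?_
  simp_rw [cons_mem_cubeSlab, zero_mul, zero_add]
  by_cases hx : x ∈ cubeSlab a Δ t
  · rw [indicator_of_mem hx, show 2 * Δ = Δ - -Δ by ring, ← Real.volume_Ioo]
    congr 1
    ext y
    simp [abs_lt, hx.1, hx.2]
  · rw [indicator_of_notMem hx, ← measure_empty (μ := (volume : Measure ℝ))]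
    congr 1
    ext y
    simp only [mem_ofPred_eq, mem_empty_iff_false, iff_false]
    exact fun hy => hx ⟨hy.1.2, hy.2⟩

theorem ofReal_inv_mul_lintegral_le_volume_cubeSlab_cons {n : ℕ} (a : Fin n → ℝ) {b : ℝ}
    (hb : 0 < b) (Δ t : ℝ) :
    ENNReal.ofReal b⁻¹ * ∫⁻ r in Ioc |b * Δ - t| (b * Δ + t), volume (cubeSlab a Δ r) ≤
      volume (cubeSlab (Fin.cons b a) Δ t) := by
  -- The fibres of `P` are the intervals of the one-dimensional bound over `x`, and the slabs
  -- `cubeSlab a Δ r` over `r`.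
  set P : Set ((Fin n → ℝ) × ℝ) :=
    {p | (∀ i, |p.1 i| < Δ) ∧ max |b * Δ - t| |∑ i, a i * p.1 i| < p.2 ∧ p.2 ≤ b * Δ + t}
  have hP : MeasurableSet P := by measurability
  have hslice : ∀ r ∈ Ioc |b * Δ - t| (b * Δ + t),
      volume (cubeSlab a Δ r) = volume ((fun x => (x, r)) ⁻¹' P) := by
    rintro r ⟨her, hrq⟩
    congr 1
    ext x
    simp [P, cubeSlab, her, hrq]
  have hfiber : ∀ x, ENNReal.ofReal b⁻¹ * volume (Prod.mk x ⁻¹' P) ≤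
      volume {y : ℝ | Fin.cons y x ∈ cubeSlab (Fin.cons b a) Δ t} := by
    intro x
    simp_rw [cons_mem_cubeSlab]
    by_cases hx : ∀ i, |x i| < Δ
    · have hPx : Prod.mk x ⁻¹' P = Ioc (max |b * Δ - t| |∑ i, a i * x i|) (b * Δ + t) := by
        ext r; simp [P, hx]
      simpa [hPx, hx] using ofReal_inv_mul_volume_Ioc_le_volume_slab (Δ := Δ) (t := t) hb
    · have hPx : Prod.mk x ⁻¹' P = ∅ := by ext r; simp [P, hx]
      simp [hPx]
  calc ENNReal.ofReal b⁻¹ * ∫⁻ r in Ioc |b * Δ - t| (b * Δ + t), volume (cubeSlab a Δ r)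
      ≤ ENNReal.ofReal b⁻¹ * ∫⁻ r, volume ((fun x => (x, r)) ⁻¹' P) := by
        rw [setLIntegral_congr_fun measurableSet_Ioc hslice]
        gcongr _ * ?_
        exact setLIntegral_le_lintegral _ _
    _ = ∫⁻ x, ENNReal.ofReal b⁻¹ * volume (Prod.mk x ⁻¹' P) := by
        rw [← Measure.prod_apply_symm hP, Measure.prod_apply hP,
          lintegral_const_mul' _ _ ENNReal.ofReal_ne_top]
    _ ≤ _ := by
        rw [volume_eq_lintegral_volume_cons (measurableSet_cubeSlab _ _ _)]
        exact lintegral_mono hfiber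

-- `L` is strict so that `L - b * Δ` stays positive when the remaining coefficients vanish.
theorem ofReal_le_volume_cubeSlab_of_lt {n : ℕ} {a : Fin n → ℝ} (ha : ∀ i, 0 ≤ a i)
    {Δ L t : ℝ} (hΔ : 0 ≤ Δ) (hL : Δ * ∑ i, a i < L) (ht : 0 < t) :
    ENNReal.ofReal (min 1 (t / L) * (2 * Δ) ^ n) ≤ volume (cubeSlab a Δ t) := by
  induction n generalizing L t with
  | zero =>
    rw [show cubeSlab a Δ t = univ by ext x; simp [cubeSlab, ht]]
    simp [volume_pi]
  | succ n ih =>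
    obtain ⟨b, a, rfl⟩ : ∃ b a', a = Fin.cons b a' := ⟨_, _, (Fin.cons_self_tail a).symm⟩
    replace ha : 0 ≤ b ∧ ∀ i, 0 ≤ a i := ⟨ha 0, fun i => ha i.succ⟩
    rw [Fin.sum_univ_succ, Fin.cons_zero] at hL
    simp only [Fin.cons_succ] at hL
    rcases ha.1.eq_or_lt with rfl | hb
    · rw [volume_cubeSlab_cons_zero]
      calc ENNReal.ofReal (min 1 (t / L) * (2 * Δ) ^ (n + 1))
          = ENNReal.ofReal (2 * Δ) * ENNReal.ofReal (min 1 (t / L) * (2 * Δ) ^ n) := by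
            rw [← ENNReal.ofReal_mul (by positivity), pow_succ]
            ring_nf
        _ ≤ _ := by
            gcongr
            exact ih ha.2 (by linarith) ht
    · have hc : 0 ≤ b * Δ := by positivity
      have hD : 0 < L - b * Δ := by
        have : 0 ≤ Δ * ∑ i, a i := mul_nonneg hΔ (Finset.sum_nonneg fun i _ => ha.2 i)
        linarith
      have hcont : Continuous fun r : ℝ => min 1 (r / (L - b * Δ)) * (2 * Δ) ^ n := by fun_prop
      calc ENNReal.ofReal (min 1 (t / L) * (2 * Δ) ^ (n + 1))
          ≤ ENNReal.ofReal b⁻¹ * ENNReal.ofReal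
              (∫ r in |b * Δ - t|..b * Δ + t, min 1 (r / (L - b * Δ)) * (2 * Δ) ^ n) := by
            rw [← ENNReal.ofReal_mul (by positivity)]
            refine ENNReal.ofReal_le_ofReal ?_
            have key := two_mul_min_le_integral_min_one_div hc hD ht.le
            rw [sub_add_cancel] at key
            rw [intervalIntegral.integral_mul_const]
            calc min 1 (t / L) * (2 * Δ) ^ (n + 1)
                = b⁻¹ * (2 * (b * Δ) * min 1 (t / L) * (2 * Δ) ^ n) := by
                  field_simp
                  ring
              _ ≤ _ := by gcongr
        _ = ENNReal.ofReal b⁻¹ * ∫⁻ r in Ioc |b * Δ - t| (b * Δ + t),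
              ENNReal.ofReal (min 1 (r / (L - b * Δ)) * (2 * Δ) ^ n) := by
            rw [intervalIntegral.integral_of_le (abs_sub_le_iff.2 ⟨by linarith, by linarith⟩),
              ofReal_integral_eq_lintegral_ofReal hcont.integrableOn_Ioc]
            refine (ae_restrict_mem measurableSet_Ioc).mono fun r hr => ?_
            have : 0 < r := (abs_nonneg _).trans_lt hr.1
            positivity
        _ ≤ ENNReal.ofReal b⁻¹ *
              ∫⁻ r in Ioc |b * Δ - t| (b * Δ + t), volume (cubeSlab a Δ r) := by
            gcongr _ * ?_
            refine setLIntegral_mono' measurableSet_Ioc fun r hr => ?_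
            exact ih ha.2 (by linarith) ((abs_nonneg _).trans_lt hr.1)
        _ ≤ _ := ofReal_inv_mul_lintegral_le_volume_cubeSlab_cons a hb Δ t

theorem ofReal_le_volume_cubeSlab {n : ℕ} {a : Fin n → ℝ} (ha : ∀ i, 0 ≤ a i)
    {Δ L t : ℝ} (hΔ : 0 ≤ Δ) (hL : Δ * ∑ i, a i ≤ L) (hL0 : 0 < L) (ht : 0 < t) :
    ENNReal.ofReal (min 1 (t / L) * (2 * Δ) ^ n) ≤ volume (cubeSlab a Δ t) := by
  have hcont : ContinuousAt (fun L' => min 1 (t / L') * (2 * Δ) ^ n) L := by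
    fun_prop (disch := exact hL0.ne')
  refine le_of_tendsto ((ENNReal.continuous_ofReal.continuousAt.comp hcont).tendsto.mono_left
    (nhdsWithin_le_nhds (s := Ioi L))) ?_
  filter_upwards [self_mem_nhdsWithin] with L' hL'
  exact ofReal_le_volume_cubeSlab_of_lt ha hΔ (hL.trans_lt hL') ht

theorem cube_slab_volume_general (n : ℕ) (hn : 1 ≤ n) (a : Fin n → ℝ)
    (ha : ∀ i, a i ∈ Set.Icc (0:ℝ) 1) (k : ℕ)
    (ρ : ℝ) (hρ : 0 < ρ) (hρk : ρ ≤ (k : ℝ) + 1) :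
    (2 : ENNReal) ^ n ≤
      volume {x : Fin n → ℝ |
        (∀ i, |x i| < ((k : ℝ) + 1) / ρ) ∧
        |∑ i, a i * x i| ≤ (n : ℝ) * (ρ / ((k : ℝ) + 1)) ^ (n - 1)} := by
  set Δ := ((k : ℝ) + 1) / ρ
  have hΔ : 1 ≤ Δ := (one_le_div hρ).2 hρk
  have hn0 : (0 : ℝ) < n := by exact_mod_cast hn
  have hsum : Δ * ∑ i, a i ≤ n * Δ := by
    rw [mul_comm]
    gcongr
    simpa using Finset.sum_le_sum fun i (_ : i ∈ Finset.univ) => (ha i).2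
  have hfrac : min 1 ((n : ℝ) * (ρ / ((k : ℝ) + 1)) ^ (n - 1) / (n * Δ)) = Δ⁻¹ ^ n := by
    rw [show ρ / ((k : ℝ) + 1) = Δ⁻¹ from (inv_div _ _).symm, mul_div_mul_left _ _ hn0.ne',
      div_eq_mul_inv, ← pow_succ, Nat.sub_add_cancel hn]
    exact min_eq_right (pow_le_one₀ (by positivity) (inv_le_one_of_one_le₀ hΔ))
  calc (2 : ENNReal) ^ n
      = ENNReal.ofReal (min 1 ((n : ℝ) * (ρ / ((k : ℝ) + 1)) ^ (n - 1) / (n * Δ)) *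
          (2 * Δ) ^ n) := by
        rw [hfrac, ← mul_pow, mul_left_comm, inv_mul_cancel₀ (by positivity), mul_one,
          ENNReal.ofReal_pow zero_le_two]
        simp
    _ ≤ volume (cubeSlab a Δ ((n : ℝ) * (ρ / ((k : ℝ) + 1)) ^ (n - 1))) :=
        ofReal_le_volume_cubeSlab (fun i => (ha i).1) (by positivity) hsum (by positivity)
          (by positivity)
    _ ≤ _ := by
        refine measure_mono fun x hx => ?_
        exact ⟨hx.1, hx.2.le⟩

/-- **Volume lower bound for the cube–slab body.**
For `n ≥ 1`, `a ∈ [0,1]ⁿ`, an integer `k ≥ 1` and `0 < ρ ≤ k+1`, the symmetric convex body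
`K = {x : ‖x‖∞ < (k+1)/ρ, |⟨a,x⟩| ≤ n (ρ/(k+1))^{n-1}}` has volume at least `2ⁿ`. -/
theorem cube_slab_volume (n : ℕ) (hn : 1 ≤ n) (a : Fin n → ℝ)
    (ha : ∀ i, a i ∈ Set.Icc (0:ℝ) 1) (k : ℕ) (hk : 1 ≤ k)
    (ρ : ℝ) (hρ : 0 < ρ) (hρk : ρ ≤ (k : ℝ) + 1) :
    (2 : ENNReal) ^ n ≤
      volume {x : Fin n → ℝ |
        (∀ i, |x i| < ((k : ℝ) + 1) / ρ) ∧
        |∑ i, a i * x i| ≤ (n : ℝ) * (ρ / ((k : ℝ) + 1)) ^ (n - 1)} :=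
  cube_slab_volume_general n hn a ha k ρ hρ hρk
end

section
/- Let r, k be integers with 0 < r < k. Let α_1, …, α_k ∈ ℝ satisfy Σ_{i=1}^k i·α_i = 0, and set β := α_r + α_{r+1} + ⋯ + α_k. Then for every integer j with |j| ≤ k there exist integers λ_1, …, λ_k with |λ_i| ≤ max{r−1, k−r} for all i, such that j·β = Σ_{i=1}^k λ_i·α_i. -/
/-!
Since `∑ i αᵢ = 0`, subtracting `c · ∑ i αᵢ` from the obvious representation `j β = ∑_{i ≥ r} j αᵢ`
changes nothing. With `c = 0` when `|j| < r` and `c = sign j` otherwise, every coefficient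
`(if r ≤ i then j else 0) - c i` is at most `max (r - 1) (k - r)` in absolute value.
-/

open Finset

theorem sum_Icc_one_ite_le {M : Type*} [AddCommMonoid M] {r : ℕ} (hr : 0 < r) (k : ℕ)
    (f : ℕ → M) :
    ∑ i ∈ Icc 1 k, (if r ≤ i then f i else 0) = ∑ i ∈ Icc r k, f i := by
  rw [← sum_filter]
  congr 1
  ext i
  simp only [mem_filter, mem_Icc]
  omega

theorem mul_sum_Icc_eq_sum_sub_mul {R : Type*} [CommRing R] {r : ℕ} (hr : 0 < r) {k : ℕ}
    {α : ℕ → R} (hsum : ∑ i ∈ Icc 1 k, (i : R) * α i = 0) (j c : ℤ) :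
    (j : R) * ∑ i ∈ Icc r k, α i =
      ∑ i ∈ Icc 1 k, (((if r ≤ i then j else 0) - c * i : ℤ) : R) * α i := by
  have hshift : ∀ i, (((if r ≤ i then j else 0) - c * i : ℤ) : R) * α i =
      (if r ≤ i then (j : R) * α i else 0) - (c : R) * ((i : R) * α i) := by
    intro i
    split_ifs <;> push_cast <;> ring
  simp only [hshift, sum_sub_distrib, ← mul_sum, hsum, mul_zero, sub_zero,
    sum_Icc_one_ite_le hr]

theorem exists_shift_abs_le {r k : ℕ} {j : ℤ} (hj : |j| ≤ k) :
    ∃ c : ℤ, ∀ i ∈ Icc 1 k,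
      |(if r ≤ i then j else 0) - c * i| ≤ (max (r - 1) (k - r) : ℤ) := by
  obtain hsmall | hpos | hneg : |j| < r ∨ (r : ℤ) ≤ j ∨ j ≤ -r := by
    rcases abs_cases j with ⟨h, _⟩ | ⟨h, _⟩ <;> omega
  · refine ⟨0, fun i hi => ?_⟩
    rw [mem_Icc] at hi
    split_ifs <;> simp only [abs_le, abs_lt] at hj hsmall ⊢ <;> omega
  · refine ⟨1, fun i hi => ?_⟩
    rw [mem_Icc] at hi
    split_ifs <;> simp only [abs_le] at hj ⊢ <;> omega
  · refine ⟨-1, fun i hi => ?_⟩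
    rw [mem_Icc] at hi
    split_ifs <;> simp only [abs_le] at hj ⊢ <;> omega

theorem representation_small_coefficients_general (r k : ℕ) (hr : 0 < r)
    (α : ℕ → ℝ) (hsum : ∑ i ∈ Finset.Icc 1 k, (i : ℝ) * α i = 0)
    (j : ℤ) (hj : |j| ≤ (k : ℤ)) :
    ∃ lam : ℕ → ℤ, (∀ i ∈ Finset.Icc 1 k, |lam i| ≤ (max (r - 1) (k - r) : ℤ)) ∧
      (j : ℝ) * (∑ i ∈ Finset.Icc r k, α i) = ∑ i ∈ Finset.Icc 1 k, (lam i : ℝ) * α i := by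
  obtain ⟨c, hc⟩ := exists_shift_abs_le (r := r) hj
  exact ⟨_, hc, mul_sum_Icc_eq_sum_sub_mul hr hsum j c⟩

/-- **Representing multiples of a partial sum with small coefficients (Lemma 2.3).**
Let `0 < r < k` and `α₁, …, α_k ∈ ℝ` with `∑ i·αᵢ = 0`, and `β := α_r + ⋯ + α_k`.
Then every multiple `j·β` with `|j| ≤ k` is an integer combination `∑ λᵢ αᵢ` with
`|λᵢ| ≤ max (r-1) (k-r)`. -/
theorem representation_small_coefficients (r k : ℕ) (hr : 0 < r) (hrk : r < k)
    (α : ℕ → ℝ) (hsum : ∑ i ∈ Finset.Icc 1 k, (i : ℝ) * α i = 0)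
    (j : ℤ) (hj : |j| ≤ (k : ℤ)) :
    ∃ lam : ℕ → ℤ, (∀ i ∈ Finset.Icc 1 k, |lam i| ≤ (max (r - 1) (k - r) : ℤ)) ∧
      (j : ℝ) * (∑ i ∈ Finset.Icc r k, α i) = ∑ i ∈ Finset.Icc 1 k, (lam i : ℝ) * α i :=
  representation_small_coefficients_general r k hr α hsum j hj
end

section
/- Let r, k be integers with 0 < r < k and let δ ≥ 0. Let α_1, …, α_k ∈ ℝ satisfy |Σ_{i=1}^k i·α_i| ≤ δ, and set β := α_r + α_{r+1} + ⋯ + α_k. Then for every integer j with 0 ≤ j ≤ k there exist integers λ_1, …, λ_k with |λ_i| ≤ max{r−1, k−r} for all i, such that |j·β − Σ_{i=1}^k λ_i·α_i| ≤ δ. -/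
/-!
Since `r ≥ 1`, `j β = ∑ᵢ j·[r ≤ i] αᵢ` exactly. For `j < r` these coefficients already lie in
`[0, r - 1]`. For `j ≥ r`, subtracting the weights `i` changes the combination by `∑ i αᵢ`, which
costs at most `δ`, and the coefficients become `-i` for `i < r` and `j - i ∈ [r - k, k - r]` for
`i ≥ r`.
-/

open Finset

theorem sum_Icc_one_ite_mul_eq_mul_sum_Icc {R : Type*} [NonUnitalNonAssocSemiring R] {r : ℕ}
    (hr : 0 < r) (k : ℕ) (c : R) (α : ℕ → R) :
    ∑ i ∈ Icc 1 k, (if r ≤ i then c else 0) * α i = c * ∑ i ∈ Icc r k, α i := by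
  have htail : (Icc 1 k).filter (r ≤ ·) = Icc r k := by
    ext i
    simp only [mem_filter, mem_Icc]
    omega
  rw [mul_sum, ← htail, sum_filter]
  simp only [ite_mul, zero_mul]

theorem abs_ite_le_max {r j : ℕ} (hjr : j < r) (k i : ℕ) :
    |(if r ≤ i then (j : ℤ) else 0)| ≤ max ((r : ℤ) - 1) ((k : ℤ) - r) := by
  refine le_max_of_le_left ?_
  split_ifs <;> simp only [abs_zero, Nat.abs_cast] <;> omega

theorem abs_ite_sub_le_max {r k j i : ℕ} (hrj : r ≤ j) (hjk : j ≤ k) (hik : i ≤ k) :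
    |(if r ≤ i then (j : ℤ) else 0) - i| ≤ max ((r : ℤ) - 1) ((k : ℤ) - r) := by
  split_ifs
  · exact le_max_of_le_right (abs_sub_le_iff.2 ⟨by omega, by omega⟩)
  · exact le_max_of_le_left (by rw [zero_sub, abs_neg, Nat.abs_cast]; omega)

theorem approximate_representation_general (r k : ℕ) (hr : 0 < r)
    (δ : ℝ)
    (α : ℕ → ℝ) (hsum : |∑ i ∈ Finset.Icc 1 k, (i : ℝ) * α i| ≤ δ)
    (j : ℕ) (hj : j ≤ k) :
    ∃ lam : ℕ → ℤ, (∀ i ∈ Finset.Icc 1 k, |lam i| ≤ (max (r - 1) (k - r) : ℤ)) ∧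
      |(j : ℝ) * (∑ i ∈ Finset.Icc r k, α i) - ∑ i ∈ Finset.Icc 1 k, (lam i : ℝ) * α i| ≤ δ := by
  have hβ := sum_Icc_one_ite_mul_eq_mul_sum_Icc hr k (j : ℝ) α
  rcases lt_or_ge j r with hjr | hrj
  · refine ⟨fun i => if r ≤ i then (j : ℤ) else 0, fun i _ => abs_ite_le_max hjr k i, ?_⟩
    push_cast
    rw [hβ, sub_self, abs_zero]
    exact (abs_nonneg _).trans hsum
  · refine ⟨fun i => (if r ≤ i then (j : ℤ) else 0) - i,
      fun i hi => abs_ite_sub_le_max hrj hj (mem_Icc.1 hi).2, ?_⟩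
    push_cast
    rw [← hβ]
    simp only [sub_mul, sum_sub_distrib, sub_sub_cancel]
    exact hsum

/-- **Approximate representation of multiples of a partial sum (remark after Lemma 2.3).**
Let `0 < r < k`, `δ ≥ 0` and `α₁, …, α_k ∈ ℝ` with `|∑ i·αᵢ| ≤ δ`, and `β := α_r + ⋯ + α_k`.
Then for every `0 ≤ j ≤ k` there is an integer combination `∑ λᵢ αᵢ` with
`|λᵢ| ≤ max (r-1) (k-r)` and `|j·β - ∑ λᵢ αᵢ| ≤ δ`. -/
theorem approximate_representation (r k : ℕ) (hr : 0 < r) (hrk : r < k)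
    (δ : ℝ) (hδ : 0 ≤ δ)
    (α : ℕ → ℝ) (hsum : |∑ i ∈ Finset.Icc 1 k, (i : ℝ) * α i| ≤ δ)
    (j : ℕ) (hj : j ≤ k) :
    ∃ lam : ℕ → ℤ, (∀ i ∈ Finset.Icc 1 k, |lam i| ≤ (max (r - 1) (k - r) : ℤ)) ∧
      |(j : ℝ) * (∑ i ∈ Finset.Icc r k, α i) - ∑ i ∈ Finset.Icc 1 k, (lam i : ℝ) * α i| ≤ δ :=
  approximate_representation_general r k hr δ α hsum j hj
end

section
/- Let k, r be integers with 0 < r < k, let m ≥ 8 be an integer, let n = m², and let f : ℕ → ℝ be non-negative with f(m) ≥ 4·log₂(m). Suppose that for every a' ∈ [-1,1]^m there exists x' ∈ ℤ^m \ {0} with ‖x'‖∞ ≤ k and |⟨a',x'⟩| ≤ 2^{−f(m)}. Then for every a ∈ [-1,1]^n there exists x ∈ ℤ^n \ {0} with ‖x‖∞ ≤ max{r−1, k−r} and |⟨a,x⟩| ≤ 2^{−f(m)/2}. -/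
/-!
The oracle cannot be too good: on the vector `((k+1)^i / (k+1)^(m-1))ᵢ` every nonzero
combination with coefficients in `[-k, k]` is a nonzero integer (read it in base `k + 1`) divided
by `(k+1)^(m-1)`, so `2^{f(m)} ≤ (k+1)^(m-1)`. With `C = max (r-1) (k-r)` we have `k + 1 ≤ (C+1)²`,
hence `2^{f(m)/2} ≤ (C+1)^(m-1)`, and this is so small compared with the `(C+1)^(m²)` vectors
`v ∈ {0,…,C}^(m²)` that by pigeonhole two of the sums `⟨a, v⟩` are `2^{-f(m)/2}`-close; their
difference is the required `x`.
-/

open Finset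

theorem Int.eq_zero_of_sum_mul_pow_eq_zero {b : ℤ} :
    ∀ {m : ℕ} {x : Fin m → ℤ}, (∀ i, |x i| < b) → ∑ i, x i * b ^ (i : ℕ) = 0 → x = 0
  | 0, _, _, _ => Subsingleton.elim _ _
  | m + 1, x, hx, hsum => by
    set T := ∑ i : Fin m, x i.succ * b ^ (i : ℕ)
    have hsplit : x 0 + b * T = 0 := by
      rw [← hsum, Fin.sum_univ_succ, mul_sum]
      simp [pow_succ, mul_comm, mul_left_comm]
    have hx0 : x 0 = 0 := Int.eq_zero_of_abs_lt_dvd ⟨-T, by linarith⟩ (hx 0)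
    have hb : b ≠ 0 := ((abs_nonneg _).trans_lt (hx 0)).ne'
    have htail : (fun i : Fin m => x i.succ) = 0 :=
      Int.eq_zero_of_sum_mul_pow_eq_zero (fun i => hx i.succ)
        (by simpa [hx0, hb] using hsplit)
    funext i
    cases i using Fin.cases with
    | zero => exact hx0
    | succ i => exact congrFun htail i

theorem one_le_mul_pow_of_forall_exists_abs_sum_le {k m : ℕ} {ε : ℝ}
    (h : ∀ a : Fin m → ℝ, (∀ i, a i ∈ Set.Icc (-1 : ℝ) 1) →
      ∃ x : Fin m → ℤ, x ≠ 0 ∧ (∀ i, |x i| ≤ (k : ℤ)) ∧ |∑ i, a i * (x i : ℝ)| ≤ ε) :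
    1 ≤ ε * (k + 1) ^ (m - 1) := by
  set q : ℝ := k + 1
  have hq : 1 ≤ q := by simp [q]
  have hQ : 0 < q ^ (m - 1) := by positivity
  obtain ⟨x, hx0, hxk, hxε⟩ := h (fun i => q ^ (i : ℕ) / q ^ (m - 1)) fun i =>
    ⟨by linarith [show 0 < q ^ (i : ℕ) / q ^ (m - 1) by positivity],
      div_le_one_of_le₀ (pow_le_pow_right₀ hq (by omega)) hQ.le⟩
  set T : ℤ := ∑ i, x i * (k + 1 : ℤ) ^ (i : ℕ)
  have hT : 1 ≤ |(T : ℝ)| := by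
    refine mod_cast Int.one_le_abs fun hT => hx0 ?_
    exact Int.eq_zero_of_sum_mul_pow_eq_zero (fun i => by linarith [hxk i]) hT
  have hsum : ∑ i : Fin m, q ^ (i : ℕ) / q ^ (m - 1) * (x i : ℝ) = T / q ^ (m - 1) := by
    push_cast [T, q, sum_div]
    exact sum_congr rfl fun i _ => by ring
  rw [hsum, abs_div, abs_of_pos hQ, div_le_iff₀ hQ] at hxε
  linarith

theorem one_le_two_rpow_neg_half_mul_pow {t b c : ℝ} {j : ℕ} (hb : 0 ≤ b) (hc : 0 ≤ c)
    (hbc : b ≤ c ^ 2) (h : 1 ≤ 2 ^ (-t) * b ^ j) : 1 ≤ 2 ^ (-t / 2) * c ^ j := by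
  have hsq : (2 : ℝ) ^ (-t) = (2 ^ (-t / 2)) ^ 2 := by
    rw [← Real.rpow_mul_natCast zero_le_two]; ring_nf
  refine (one_le_sq_iff₀ (by positivity)).mp ?_
  calc 1 ≤ 2 ^ (-t) * b ^ j := h
    _ ≤ 2 ^ (-t) * (c ^ 2) ^ j := by gcongr
    _ = (2 ^ (-t / 2) * c ^ j) ^ 2 := by rw [hsq, mul_pow, ← pow_mul, ← pow_mul, mul_comm 2]

theorem exists_ne_abs_sub_lt_of_mem_Ico {α : Type*} [Fintype α] {S : α → ℝ} {lo ε : ℝ} {N : ℕ}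
    (hε : 0 < ε) (hS : ∀ v, S v ∈ Set.Ico lo (lo + N * ε)) (hN : N < Fintype.card α) :
    ∃ u v, u ≠ v ∧ |S u - S v| < ε := by
  have hbox : ∀ v ∈ (univ : Finset α), ⌊(S v - lo) / ε⌋ ∈ Ico (0 : ℤ) N := by
    intro v _
    obtain ⟨hlo, hhi⟩ := hS v
    rw [mem_Ico, Int.floor_nonneg, Int.floor_lt, le_div_iff₀ hε, div_lt_iff₀ hε]
    push_cast
    constructor <;> linarith
  obtain ⟨u, -, v, -, huv, hfloor⟩ :=
    exists_ne_map_eq_of_card_lt_of_maps_to (by simpa using hN) hbox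
  refine ⟨u, v, huv, ?_⟩
  have h := Int.abs_sub_lt_one_of_floor_eq_floor hfloor
  rwa [← sub_div, sub_sub_sub_cancel_right, abs_div, abs_of_pos hε, div_lt_one hε] at h

theorem exists_ne_zero_abs_le_abs_sum_mul_lt {n C : ℕ} {ε : ℝ} (a : Fin n → ℝ)
    (ha : ∀ i, a i ∈ Set.Icc (-1 : ℝ) 1) (hε : 0 < ε)
    (hC : 2 * C * n < ((C + 1) ^ n - 1) * ε) :
    ∃ x : Fin n → ℤ, x ≠ 0 ∧ (∀ i, |x i| ≤ (C : ℤ)) ∧ |∑ i, a i * (x i : ℝ)| < ε := by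
  set S : (Fin n → Fin (C + 1)) → ℝ := fun v => ∑ i, a i * ((v i : ℕ) : ℝ)
  have hS : ∀ v, |S v| ≤ C * n := by
    intro v
    calc |S v| ≤ ∑ i, |a i * ((v i : ℕ) : ℝ)| := abs_sum_le_sum_abs _ _
      _ ≤ ∑ _i : Fin n, (C : ℝ) := by
          gcongr with i
          rw [abs_mul, Nat.abs_cast]
          have hv : ((v i : ℕ) : ℝ) ≤ C := by exact_mod_cast Nat.lt_succ_iff.mp (v i).isLt
          exact (mul_le_of_le_one_left (by positivity) (abs_le.mpr (ha i))).trans hv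
      _ = C * n := by simp [mul_comm]
  have hN : (((C + 1) ^ n - 1 : ℕ) : ℝ) = (C + 1) ^ n - 1 := by
    rw [Nat.cast_sub (Nat.one_le_pow _ _ C.succ_pos)]; push_cast; ring
  obtain ⟨u, v, huv, hlt⟩ := exists_ne_abs_sub_lt_of_mem_Ico (S := S) (lo := -(C * n))
    (N := (C + 1) ^ n - 1) hε
    (fun v => ⟨by linarith [(abs_le.mp (hS v)).1], by rw [hN]; linarith [(abs_le.mp (hS v)).2]⟩)
    (by simp)
  refine ⟨fun i => (u i : ℕ) - (v i : ℕ), fun h => huv ?_, fun i => ?_, ?_⟩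
  · funext i
    exact Fin.ext (by simpa [sub_eq_zero] using congrFun h i)
  · have := (u i).isLt; have := (v i).isLt
    simp only [abs_le]; omega
  · convert hlt using 2
    simp only [S, ← sum_sub_distrib]
    push_cast
    ring_nf

theorem two_mul_mul_pow_add_one_lt_pow {C m : ℕ} (hC : 1 ≤ C) (hm : 4 ≤ m) :
    2 * C * (m * m) * (C + 1) ^ (m - 1) + 1 < (C + 1) ^ (m * m) := by
  set D := C + 1 with hD_def
  have hD : 2 ≤ D := by omega
  have hm2 : m * m ≤ D ^ (2 * m) := calc
    m * m ≤ 2 ^ m * 2 ^ m := Nat.mul_le_mul m.lt_two_pow_self.le m.lt_two_pow_self.le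
    _ = 2 ^ (2 * m) := by rw [← pow_add, two_mul]
    _ ≤ D ^ (2 * m) := Nat.pow_le_pow_left hD _
  calc 2 * C * (m * m) * D ^ (m - 1) + 1
      ≤ D ^ 2 * D ^ (2 * m) * D ^ (m - 1) + 1 := by gcongr; rw [hD_def]; nlinarith
    _ = D ^ (3 * m + 1) + 1 := by rw [← pow_add, ← pow_add]; congr 2; omega
    _ < D * D ^ (3 * m + 1) := by
        nlinarith [Nat.le_self_pow (by omega : 3 * m + 1 ≠ 0) D,
          Nat.mul_le_mul_right (D ^ (3 * m + 1)) hD]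
    _ = D ^ (3 * m + 2) := (pow_succ' _ _).symm
    _ ≤ D ^ (m * m) := Nat.pow_le_pow_right (by omega) (by nlinarith)

theorem coefficient_halving_general (k r : ℕ) (hrk : r < k)
    (m : ℕ) (hm : 8 ≤ m) (f : ℕ → ℝ)
    (horacle : ∀ a' : Fin m → ℝ, (∀ i, a' i ∈ Set.Icc (-1:ℝ) 1) →
      ∃ x' : Fin m → ℤ, x' ≠ 0 ∧ (∀ i, |x' i| ≤ (k : ℤ)) ∧
        |∑ i, a' i * (x' i : ℝ)| ≤ (2 : ℝ) ^ (-(f m))) :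
    ∀ a : Fin (m * m) → ℝ, (∀ i, a i ∈ Set.Icc (-1:ℝ) 1) →
      ∃ x : Fin (m * m) → ℤ, x ≠ 0 ∧ (∀ i, |x i| ≤ (max (r - 1) (k - r) : ℤ)) ∧
        |∑ i, a i * (x i : ℝ)| ≤ (2 : ℝ) ^ (-(f m) / 2) := by
  intro a ha
  obtain ⟨C, hC⟩ : ∃ C : ℕ, (C : ℤ) = max ((r : ℤ) - 1) (k - r) :=
    ⟨_, Int.toNat_of_nonneg (le_max_of_le_right (by omega))⟩
  have hC1 : 1 ≤ C := by omega
  have hkC : (k : ℝ) + 1 ≤ ((C : ℝ) + 1) ^ 2 := by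
    have : k + 1 ≤ (C + 1) ^ 2 := by nlinarith [(by omega : k ≤ 2 * C + 1)]
    exact_mod_cast this
  set ε : ℝ := 2 ^ (-(f m) / 2)
  have hεC : 1 ≤ ε * (C + 1) ^ (m - 1) :=
    one_le_two_rpow_neg_half_mul_pow (by positivity) (by positivity) hkC
      (one_le_mul_pow_of_forall_exists_abs_sum_le horacle)
  have hcount : (2 * C * (m * m) * (C + 1) ^ (m - 1) + 1 : ℝ) < (C + 1) ^ (m * m) := by
    exact_mod_cast two_mul_mul_pow_add_one_lt_pow hC1 (by omega : 4 ≤ m)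
  have hroom : 2 * C * ((m * m : ℕ) : ℝ) < ((C + 1) ^ (m * m) - 1) * ε := calc
    2 * C * ((m * m : ℕ) : ℝ) ≤ 2 * C * (m * m) * (ε * (C + 1) ^ (m - 1)) := by
        push_cast; exact le_mul_of_one_le_right (by positivity) hεC
    _ = 2 * C * (m * m) * (C + 1) ^ (m - 1) * ε := by ring
    _ < ((C + 1) ^ (m * m) - 1) * ε := by gcongr; linarith
  obtain ⟨x, hx0, hxC, hxa⟩ := exists_ne_zero_abs_le_abs_sum_mul_lt a ha (by positivity) hroom
  exact ⟨x, hx0, fun i => hC ▸ hxC i, hxa.le⟩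

/-- **One step of the coefficient-halving self-reduction (Lemma 2.4), existence form.**
Let `0 < r < k`, `m ≥ 8`, `n = m²`, and `f : ℕ → ℝ` non-negative with `f(m) ≥ 4 log₂ m`.
If for every `a' ∈ [-1,1]ᵐ` there is a nonzero `x' ∈ ℤᵐ` with `‖x'‖∞ ≤ k` and
`|⟨a',x'⟩| ≤ 2^{-f(m)}`, then for every `a ∈ [-1,1]^{m²}` there is a nonzero `x ∈ ℤ^{m²}`
with `‖x‖∞ ≤ max (r-1) (k-r)` and `|⟨a,x⟩| ≤ 2^{-f(m)/2}`. -/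
theorem coefficient_halving (k r : ℕ) (hr : 0 < r) (hrk : r < k)
    (m : ℕ) (hm : 8 ≤ m) (f : ℕ → ℝ) (hf0 : ∀ i, 0 ≤ f i)
    (hfm : 4 * Real.logb 2 m ≤ f m)
    (horacle : ∀ a' : Fin m → ℝ, (∀ i, a' i ∈ Set.Icc (-1:ℝ) 1) →
      ∃ x' : Fin m → ℤ, x' ≠ 0 ∧ (∀ i, |x' i| ≤ (k : ℤ)) ∧
        |∑ i, a' i * (x' i : ℝ)| ≤ (2 : ℝ) ^ (-(f m))) :
    ∀ a : Fin (m * m) → ℝ, (∀ i, a i ∈ Set.Icc (-1:ℝ) 1) →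
      ∃ x : Fin (m * m) → ℤ, x ≠ 0 ∧ (∀ i, |x i| ≤ (max (r - 1) (k - r) : ℤ)) ∧
        |∑ i, a i * (x i : ℝ)| ≤ (2 : ℝ) ^ (-(f m) / 2) :=
  coefficient_halving_general k r hrk m hm f horacle
end

section
/- Let n ≥ 1, let a ∈ [0,1]^n, let k ≥ 1 be an integer, and let ρ > 0 satisfy ρ·(ρ/k)^n < 1/2. Define the (n+1)×(n+1) matrix B by: B_{ii} = ρ/k for 1 ≤ i ≤ n, B_{i,n+1} = 0 for 1 ≤ i ≤ n, B_{n+1,j} = (1/(2nk))·(k/ρ)^n·a_j for 1 ≤ j ≤ n, and B_{n+1,n+1} = (k/ρ)^n. Then det(B) = 1, and for every y ∈ ℤ^{n+1} \ {0} with ‖By‖∞ ≤ ρ one has: y_{n+1} = 0, the vector (y_1,…,y_n) is nonzero, |y_i| ≤ k for all 1 ≤ i ≤ n, and |Σ_{i=1}^n y_i·a_i| ≤ 2nk·ρ·(ρ/k)^n. -/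
/-!
`B` is lower triangular with diagonal `(ρ/k, …, ρ/k, c)`, `c = (k/ρ)ⁿ`, so `det B = 1`.
For `‖By‖∞ ≤ ρ`, the first `n` rows give `|yᵢ| ≤ k`, hence `|∑ yᵢ aᵢ| ≤ nk` and the
`a`-part of the last row has size at most `c/2`. The hypothesis `ρ(ρ/k)ⁿ < 1/2` says
`2ρ < c`, so the multiple `c·y_{n+1}` of the last row cannot be compensated unless
`y_{n+1} = 0`; the last row then reads `c/(2nk) · ∑ yᵢ aᵢ`, which is the error bound.
-/

open Finset

namespace Matrix

variable {R : Type*} [CommRing R] {n : ℕ} {B : Matrix (Fin (n + 1)) (Fin (n + 1)) R}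

theorem det_eq_prod_castSucc_mul_last
    (hoff : ∀ i j : Fin n, i ≠ j → B i.castSucc j.castSucc = 0)
    (hlastcol : ∀ i : Fin n, B i.castSucc (Fin.last n) = 0) :
    B.det = (∏ i : Fin n, B i.castSucc i.castSucc) * B (Fin.last n) (Fin.last n) := by
  have hlower : B.IsLowerTriangular := by
    intro i j (hij : i < j)
    induction j using Fin.lastCases with
    | last => induction i using Fin.lastCases with
      | last => exact absurd hij (lt_irrefl _)
      | cast i => exact hlastcol i
    | cast j => induction i using Fin.lastCases with
      | last => exact absurd hij (Fin.castSucc_lt_last j).not_gt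
      | cast i => exact hoff i j (Fin.castSucc_lt_castSucc_iff.mp hij).ne
  rw [det_of_isLowerTriangular B hlower, Fin.prod_univ_castSucc]

theorem sum_castSucc_row_mul_eq
    (hoff : ∀ i j : Fin n, i ≠ j → B i.castSucc j.castSucc = 0)
    (hlastcol : ∀ i : Fin n, B i.castSucc (Fin.last n) = 0) (y : Fin (n + 1) → R) (i : Fin n) :
    ∑ j, B i.castSucc j * y j = B i.castSucc i.castSucc * y i.castSucc := by
  rw [Fin.sum_univ_castSucc, hlastcol, zero_mul, add_zero,
    sum_eq_single_of_mem i (mem_univ i) fun j _ hji => by rw [hoff i j hji.symm, zero_mul]]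

end Matrix

theorem Fin.exists_castSucc_ne_zero_of_last_eq_zero {M : Type*} [Zero M] {n : ℕ}
    {y : Fin (n + 1) → M} (hy : y ≠ 0) (hlast : y (Fin.last n) = 0) :
    ∃ i : Fin n, y i.castSucc ≠ 0 := by
  by_contra! h
  exact hy (funext (Fin.lastCases hlast h))

theorem Int.eq_zero_of_abs_add_mul_le {u c ρ : ℝ} {t : ℤ} (hgap : |u| + ρ < |c|)
    (h : |u + c * t| ≤ ρ) : t = 0 := by
  by_contra ht
  have h1 : (1 : ℝ) ≤ |(t : ℝ)| := by exact_mod_cast Int.one_le_abs ht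
  have h2 : |c| ≤ |c * t| := by
    rw [abs_mul]; exact le_mul_of_one_le_right (abs_nonneg c) h1
  have h3 : |c * t| ≤ |u + c * t| + |u| := by
    simpa using abs_sub (u + c * t) u
  linarith

theorem abs_le_of_abs_div_mul_le {ρ k x : ℝ} (hρ : 0 < ρ) (hk : 0 < k) (h : |ρ / k * x| ≤ ρ) :
    |x| ≤ k := by
  rw [abs_mul, abs_of_pos (div_pos hρ hk), div_mul_eq_mul_div, div_le_iff₀ hk] at h
  exact le_of_mul_le_mul_left h hρ

theorem abs_sum_mul_le_card_mul {ι : Type*} [Fintype ι] {y a : ι → ℝ} {k : ℝ}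
    (hy : ∀ i, |y i| ≤ k) (ha : ∀ i, |a i| ≤ 1) :
    |∑ i, y i * a i| ≤ Fintype.card ι * k := by
  calc |∑ i, y i * a i| ≤ ∑ i, |y i * a i| := abs_sum_le_sum_abs _ _
    _ ≤ ∑ _i : ι, k := sum_le_sum fun i _ => by
        rw [abs_mul]
        exact (mul_le_of_le_one_right (abs_nonneg _) (ha i)).trans (hy i)
    _ = Fintype.card ι * k := by simp

theorem Int.eq_zero_and_abs_le_of_abs_div_mul_add_mul_le {c m ρ S : ℝ} {t : ℤ} (hm : 0 < m)
    (hρc : 2 * ρ < c) (hS : 2 * |S| ≤ m) (h : |c / m * S + c * t| ≤ ρ) :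
    t = 0 ∧ |S| ≤ m * ρ / c := by
  have hc : 0 < c := by linarith [(abs_nonneg _).trans h]
  have hu : 2 * |c / m * S| ≤ c := by
    rw [abs_mul, abs_of_pos (div_pos hc hm), div_mul_eq_mul_div, mul_div_assoc', div_le_iff₀ hm]
    nlinarith
  have ht : t = 0 := Int.eq_zero_of_abs_add_mul_le (by rw [abs_of_pos hc]; linarith) h
  refine ⟨ht, ?_⟩
  rw [ht, Int.cast_zero, mul_zero, add_zero, abs_mul, abs_of_pos (div_pos hc hm)] at h
  rw [le_div_iff₀ hc]
  calc |S| * c = m * (c / m * |S|) := by field_simp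
    _ ≤ m * ρ := by gcongr

/-- **The lattice used to reduce number balancing to ℓ∞-SVP (Theorem 2.5).**
For `n ≥ 1`, `a ∈ [0,1]ⁿ`, an integer `k ≥ 1` and `ρ > 0` with `ρ(ρ/k)ⁿ < 1/2`, the
`(n+1)×(n+1)` matrix `B` with `Bᵢᵢ = ρ/k` and `B_{i,n+1} = 0` for `i ≤ n`,
`B_{n+1,j} = (1/(2nk))(k/ρ)ⁿ aⱼ` and `B_{n+1,n+1} = (k/ρ)ⁿ` has `det B = 1`, and every
nonzero `y ∈ ℤ^{n+1}` with `‖By‖∞ ≤ ρ` satisfies `y_{n+1} = 0`, `(y₁,…,yₙ) ≠ 0`,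
`|yᵢ| ≤ k`, and `|∑ yᵢ aᵢ| ≤ 2nkρ(ρ/k)ⁿ`. -/
theorem svp_lattice_decoding (n : ℕ) (hn : 1 ≤ n) (a : Fin n → ℝ)
    (ha : ∀ i, a i ∈ Set.Icc (0:ℝ) 1) (k : ℕ) (hk : 1 ≤ k)
    (ρ : ℝ) (hρ : 0 < ρ) (hsmall : ρ * (ρ / (k : ℝ)) ^ n < 1 / 2)
    (B : Matrix (Fin (n + 1)) (Fin (n + 1)) ℝ)
    (hBdiag : ∀ i : Fin n, B i.castSucc i.castSucc = ρ / (k : ℝ))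
    (hBoff : ∀ i j : Fin n, i ≠ j → B i.castSucc j.castSucc = 0)
    (hBlastcol : ∀ i : Fin n, B i.castSucc (Fin.last n) = 0)
    (hBlastrow : ∀ j : Fin n,
      B (Fin.last n) j.castSucc = 1 / (2 * (n : ℝ) * (k : ℝ)) * ((k : ℝ) / ρ) ^ n * a j)
    (hBcorner : B (Fin.last n) (Fin.last n) = ((k : ℝ) / ρ) ^ n) :
    B.det = 1 ∧
    ∀ y : Fin (n + 1) → ℤ, y ≠ 0 → (∀ i, |∑ j, B i j * (y j : ℝ)| ≤ ρ) →
      y (Fin.last n) = 0 ∧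
      (∃ i : Fin n, y i.castSucc ≠ 0) ∧
      (∀ i : Fin n, |y i.castSucc| ≤ (k : ℤ)) ∧
      |∑ i : Fin n, (y i.castSucc : ℝ) * a i| ≤
        2 * (n : ℝ) * (k : ℝ) * ρ * (ρ / (k : ℝ)) ^ n := by
  have hk0 : (0 : ℝ) < k := by exact_mod_cast hk
  set c : ℝ := (k / ρ) ^ n
  have hmul_c : (ρ / k) ^ n * c = 1 := by
    rw [← mul_pow, div_mul_div_cancel₀ hk0.ne', div_self hρ.ne', one_pow]
  refine ⟨?_, fun y hy hbound => ?_⟩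
  · rw [Matrix.det_eq_prod_castSucc_mul_last hBoff hBlastcol]
    simpa only [hBdiag, hBcorner, prod_const, card_univ, Fintype.card_fin] using hmul_c
  have hyk (i : Fin n) : |(y i.castSucc : ℝ)| ≤ k := by
    refine abs_le_of_abs_div_mul_le hρ hk0 ?_
    simpa only [Matrix.sum_castSucc_row_mul_eq hBoff hBlastcol, hBdiag] using hbound i.castSucc
  have hS : 2 * |∑ i : Fin n, (y i.castSucc : ℝ) * a i| ≤ 2 * n * k := by
    have := abs_sum_mul_le_card_mul hyk fun i => abs_le.2 ⟨by linarith [(ha i).1], (ha i).2⟩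
    rw [Fintype.card_fin] at this
    linarith
  have hlast := hbound (Fin.last n)
  simp only [Fin.sum_univ_castSucc, hBlastrow, hBcorner] at hlast
  have hρc : 2 * ρ < c := by
    have := mul_lt_mul_of_pos_right hsmall (by positivity : 0 < c)
    rw [mul_assoc, hmul_c, mul_one] at this
    linarith
  have hrow : ∑ i : Fin n, 1 / (2 * n * k) * c * a i * (y i.castSucc : ℝ)
      = c / (2 * n * k) * ∑ i : Fin n, (y i.castSucc : ℝ) * a i := by
    rw [mul_sum]
    exact sum_congr rfl fun i _ => by ring
  obtain ⟨hylast, hdecode⟩ := Int.eq_zero_and_abs_le_of_abs_div_mul_add_mul_le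
    (by positivity) hρc hS (hrow ▸ hlast)
  refine ⟨hylast, Fin.exists_castSucc_ne_zero_of_last_eq_zero hy hylast,
    fun i => by exact_mod_cast hyk i, ?_⟩
  rwa [eq_inv_of_mul_eq_one_left hmul_c, ← div_eq_mul_inv]
end

section
/- Let n ≥ 1 and let ρ₀ > 0 satisfy ρ₀ ≤ 2^{2n²}. Suppose that for every c ∈ [0,2]^{4n²} there exists z ∈ {-1,0,1}^{4n²} \ {0} with |⟨c,z⟩| ≤ ρ₀·2^{−4n²}. Then for all vectors a_1, …, a_n ∈ [0,1]^n and all reals 0 < λ_1 ≤ λ_2 ≤ ⋯ ≤ λ_n ≤ 2^n with Π_{i=1}^n λ_i ≥ 1, there exists x ∈ ℤ^n \ {0} such that |⟨x, a_i⟩| ≤ 32·n^4·λ_i·ρ₀^{1/n} for all i = 1, …, n. -/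
/-!
Round the entries of `n` vectors `vᵢ ∈ [0,1]^ι` with coordinate sums at most `U` down to a grid
of mesh `Δᵢ = 4 U rᵢ`, where `0 < rᵢ ≤ 1/2`, and give the oracle the single vector
`c = ∑ᵢ Gᵢ Âᵢ` with the rapidly decreasing weights `Gᵢ = r₀ ⋯ rᵢ₋₁`. The oracle's error is below
`Gᵢ Δᵢ / 4` for every `i`, so the grid-valued products `tᵢ = ⟨Âᵢ, z⟩` vanish one after the
other: the first nonzero one would dominate the whole sum `∑ Gᵢ tᵢ`. Hence the sign vector `z`
balances every `vᵢ` up to its rounding error `|ι| Δᵢ`.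

To obtain integer coefficients, split every coordinate `j` into `m` binary digits and take
`vᵢ (j, b) = 2^(b+1) aᵢⱼ / 2^m`; then `x j = ∑_b 2^b z (j, b)` is a nonzero integer vector (signed
binary expansions of `0` are trivial) and `⟨x, aᵢ⟩ = 2^(m-1) ⟨vᵢ, z⟩`. With `m = 4n` and
`rᵢ = λᵢ ρ₀^(1/n) / 2^(4n)` the oracle error `ρ₀ / 2^(4n²)` is at most `∏ rᵢ`.
-/

open Finset

theorem sum_range_le_two_mul_of_halving {G : ℕ → ℝ} (hG : ∀ k, 0 ≤ G k)
    (hhalf : ∀ k, 2 * G (k + 1) ≤ G k) (m : ℕ) : ∑ k ∈ range m, G k ≤ 2 * G 0 := by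
  induction m generalizing G with
  | zero => simpa using hG 0
  | succ m ih =>
    rw [sum_range_succ']
    linarith [ih (G := fun k => G (k + 1)) (fun k => hG _) (fun k => hhalf _), hhalf 0]

theorem abs_sum_mul_le_sum_abs_of_abs_le_one {ι : Type*} [Fintype ι] (w : ι → ℝ) (z : ι → ℤ)
    (hz : ∀ k, |z k| ≤ 1) : |∑ k, w k * z k| ≤ ∑ k, |w k| := by
  refine (abs_sum_le_sum_abs _ _).trans (sum_le_sum fun k _ => ?_)
  rw [abs_mul]
  exact mul_le_of_le_one_right (abs_nonneg _) (by exact_mod_cast hz k)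

theorem abs_sum_mul_le_card_mul_of_sum_mul_eq_zero {ι : Type*} [Fintype ι] {v A : ι → ℝ}
    {Δ : ℝ} (z : ι → ℤ) (hz : ∀ k, |z k| ≤ 1) (hA : ∑ k, A k * z k = 0)
    (hvA : ∀ k, |v k - A k| ≤ Δ) : |∑ k, v k * (z k : ℝ)| ≤ Fintype.card ι * Δ := by
  calc |∑ k, v k * (z k : ℝ)| = |∑ k, (v k - A k) * z k| := by
        simp only [sub_mul, sum_sub_distrib, hA, sub_zero]
    _ ≤ ∑ k, |v k - A k| := abs_sum_mul_le_sum_abs_of_abs_le_one _ z hz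
    _ ≤ ∑ _k : ι, Δ := sum_le_sum fun k _ => hvA k
    _ = Fintype.card ι * Δ := by simp

theorem eq_zero_of_abs_lt_of_eq_mul_int {Δ t : ℝ} {M : ℤ} (hΔ : 0 < Δ) (ht : |t| < Δ)
    (hM : t = Δ * M) : t = 0 := by
  rw [hM, abs_mul, abs_of_pos hΔ, mul_lt_iff_lt_one_right hΔ] at ht
  have hM0 : M = 0 := Int.abs_lt_one_iff.mp (by exact_mod_cast ht)
  rw [hM, hM0, Int.cast_zero, mul_zero]

theorem eq_zero_of_abs_sum_mul_le {G Δ : ℕ → ℝ} {U δ : ℝ} {n : ℕ} (t : Fin n → ℝ)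
    (hG : ∀ k, 0 < G k) (hΔ : ∀ k, 0 < Δ k) (hhalf : ∀ k, 2 * G (k + 1) ≤ G k)
    (hstep : ∀ k, 4 * U * G (k + 1) ≤ G k * Δ k) (hδ : ∀ i : Fin n, 4 * δ ≤ G i * Δ i)
    (hU : ∀ i, |t i| ≤ U) (hgrid : ∀ i, ∃ M : ℤ, t i = Δ i * M)
    (hsum : |∑ i : Fin n, G i * t i| ≤ δ) : t = 0 := by
  induction n generalizing G Δ with
  | zero => exact Subsingleton.elim _ _
  | succ n ih =>
    simp only [Fin.sum_univ_succ, Fin.val_zero, Fin.val_succ] at hsum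
    have htail : |∑ i : Fin n, G (i + 1) * t i.succ| ≤ 2 * U * G 1 := by
      calc |∑ i : Fin n, G (i + 1) * t i.succ| ≤ ∑ i : Fin n, |G (i + 1) * t i.succ| :=
            abs_sum_le_sum_abs _ _
        _ ≤ ∑ i : Fin n, G (i + 1) * U := sum_le_sum fun i _ => by
            rw [abs_mul, abs_of_pos (hG _)]
            exact mul_le_mul_of_nonneg_left (hU _) (hG _).le
        _ = U * ∑ k ∈ range n, G (k + 1) := by
            rw [← Fin.sum_univ_eq_sum_range (fun k => G (k + 1)), mul_sum]
            exact sum_congr rfl fun i _ => mul_comm _ _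
        _ ≤ U * (2 * G 1) := mul_le_mul_of_nonneg_left
            (sum_range_le_two_mul_of_halving (fun k => (hG _).le) (fun k => hhalf _) n)
            ((abs_nonneg _).trans (hU 0))
        _ = 2 * U * G 1 := by ring
    have h0 : t 0 = 0 := by
      obtain ⟨M, hM⟩ := hgrid 0
      refine eq_zero_of_abs_lt_of_eq_mul_int (hΔ 0) ?_ hM
      have hlt : G 0 * |t 0| < G 0 * Δ 0 := by
        have := abs_sub (G 0 * t 0 + ∑ i : Fin n, G (i + 1) * t i.succ)
          (∑ i : Fin n, G (i + 1) * t i.succ)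
        rw [add_sub_cancel_right, abs_mul, abs_of_pos (hG 0)] at this
        have h4δ : 4 * δ ≤ G 0 * Δ 0 := hδ 0
        linarith [hstep 0, mul_pos (hG 0) (hΔ 0)]
      exact lt_of_mul_lt_mul_left hlt (hG 0).le
    have hrest : (fun i : Fin n => t i.succ) = 0 := by
      refine ih _ (fun k => hG _) (fun k => hΔ _) (fun k => hhalf _) (fun k => hstep _)
        (fun i => hδ i.succ) (fun i => hU _) (fun i => hgrid i.succ) ?_
      simpa [h0] using hsum
    funext i
    cases i using Fin.cases with
    | zero => exact h0
    | succ i => exact congr_fun hrest i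

theorem eq_zero_of_sum_two_pow_mul_eq_zero {m : ℕ} (f : Fin m → ℤ) (hf : ∀ b, |f b| ≤ 1)
    (hsum : ∑ b : Fin m, 2 ^ (b : ℕ) * f b = 0) : f = 0 := by
  induction m with
  | zero => exact Subsingleton.elim _ _
  | succ m ih =>
    have hsplit : f 0 + 2 * ∑ b : Fin m, 2 ^ (b : ℕ) * f b.succ = 0 := by
      rw [Fin.sum_univ_succ] at hsum
      rw [mul_sum]
      simpa [pow_succ, mul_assoc, mul_comm, mul_left_comm] using hsum
    have h0 : f 0 = 0 := by
      have := abs_le.mp (hf 0)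
      omega
    have hrest := ih (fun b => f b.succ) (fun b => hf _) (by linarith)
    funext b
    cases b using Fin.cases with
    | zero => exact h0
    | succ b => exact congr_fun hrest b

theorem exists_ne_zero_sum_mul_eq_sum_two_pow_mul {n m : ℕ} (z : Fin n × Fin m → ℤ)
    (hz : ∀ p, |z p| ≤ 1) (hz0 : z ≠ 0) :
    ∃ x : Fin n → ℤ, x ≠ 0 ∧
      ∀ y : Fin n → ℝ, ∑ j, (x j : ℝ) * y j = ∑ p, 2 ^ (p.2 : ℕ) * y p.1 * z p := by
  refine ⟨fun j => ∑ b : Fin m, 2 ^ (b : ℕ) * z (j, b), fun hx => hz0 ?_, fun y => ?_⟩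
  · funext p
    exact congr_fun (eq_zero_of_sum_two_pow_mul_eq_zero (fun b => z (p.1, b)) (fun b => hz _)
      (congr_fun hx p.1)) p.2
  · rw [Fintype.sum_prod_type]
    push_cast
    exact sum_congr rfl fun j _ => by rw [sum_mul]; exact sum_congr rfl fun b _ => by ring

def HasSignBalancing (ι : Type*) [Fintype ι] (δ : ℝ) : Prop :=
  ∀ c : ι → ℝ, (∀ k, c k ∈ Set.Icc (0 : ℝ) 2) →
    ∃ z : ι → ℤ, (∀ k, |z k| ≤ 1) ∧ z ≠ 0 ∧ |∑ k, c k * (z k : ℝ)| ≤ δ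

namespace HasSignBalancing

variable {ι κ : Type*} [Fintype ι] [Fintype κ] {δ : ℝ}

theorem of_equiv (e : ι ≃ κ) (h : HasSignBalancing κ δ) : HasSignBalancing ι δ := by
  intro c hc
  obtain ⟨z, hz1, hz0, hz⟩ := h (c ∘ e.symm) fun k => hc _
  refine ⟨z ∘ e, fun k => hz1 _, fun h0 => hz0 ?_, ?_⟩
  · funext k
    simpa using congr_fun h0 (e.symm k)
  · rw [← e.sum_comp] at hz
    simpa using hz

theorem exists_forall_sum_mul_eq_zero (h : HasSignBalancing ι δ) {n : ℕ} {U : ℝ}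
    (A : Fin n → ι → ℝ) (hA : ∀ i k, A i k ∈ Set.Icc (0 : ℝ) 1) (hU : ∀ i, ∑ k, A i k ≤ U)
    (hUpos : 0 < U) (r : ℕ → ℝ) (hr : ∀ k, r k ∈ Set.Ioc (0 : ℝ) (1 / 2))
    (hgrid : ∀ i k, ∃ M : ℤ, A i k = 4 * U * r i * M) (hδ : δ ≤ U * ∏ m ∈ range n, r m) :
    ∃ z : ι → ℤ, (∀ k, |z k| ≤ 1) ∧ z ≠ 0 ∧ ∀ i, ∑ k, A i k * (z k : ℝ) = 0 := by
  set G : ℕ → ℝ := fun k => ∏ m ∈ range k, r m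
  have hG : ∀ k, 0 < G k := fun k => prod_pos fun m _ => (hr m).1
  have hGsucc : ∀ k, G (k + 1) = G k * r k := fun k => prod_range_succ _ _
  have hhalf : ∀ k, 2 * G (k + 1) ≤ G k := fun k => by
    rw [hGsucc]; nlinarith [(hr k).2, hG k]
  have hc : ∀ k, ∑ i : Fin n, G i * A i k ∈ Set.Icc (0 : ℝ) 2 := fun k => by
    refine ⟨sum_nonneg fun i _ => mul_nonneg (hG i).le (hA i k).1, ?_⟩
    calc ∑ i : Fin n, G i * A i k ≤ ∑ i : Fin n, G i :=
          sum_le_sum fun i _ => mul_le_of_le_one_right (hG i).le (hA i k).2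
      _ = ∑ m ∈ range n, G m := Fin.sum_univ_eq_sum_range G n
      _ ≤ 2 * G 0 := sum_range_le_two_mul_of_halving (fun k => (hG k).le) hhalf n
      _ = 2 := by simp [G]
  obtain ⟨z, hz1, hz0, hz⟩ := h _ hc
  choose M hM using hgrid
  refine ⟨z, hz1, hz0, congr_fun (eq_zero_of_abs_sum_mul_le (U := U) (δ := δ)
    (Δ := fun k => 4 * U * r k) _ hG (fun k => by have := (hr k).1; positivity) hhalf
    (fun k => ?_) (fun i => ?_) (fun i => ?_) (fun i => ⟨∑ k, M i k * z k, ?_⟩) ?_)⟩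
  · rw [hGsucc]; linarith
  · have hle : ∏ m ∈ range n, r m ≤ G (i + 1) :=
      prod_anti_set_of_le_one (fun m => (hr m).1.le) (fun m => by linarith [(hr m).2])
        (range_subset_range.mpr i.isLt)
    rw [hGsucc] at hle
    nlinarith [hG i]
  · refine (abs_sum_mul_le_sum_abs_of_abs_le_one _ z hz1).trans ?_
    refine (sum_le_sum fun k _ => ?_).trans (hU i)
    rw [abs_of_nonneg (hA i k).1]
  · simp only [hM]; push_cast
    rw [mul_sum]; exact sum_congr rfl fun k _ => by ring
  · convert hz using 2
    simp only [mul_sum, sum_mul]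
    rw [sum_comm]; exact sum_congr rfl fun k _ => sum_congr rfl fun i _ => by ring

theorem exists_forall_abs_sum_le (h : HasSignBalancing ι δ) {n : ℕ} {U : ℝ}
    (v : Fin n → ι → ℝ) (hv : ∀ i k, v i k ∈ Set.Icc (0 : ℝ) 1) (hU : ∀ i, ∑ k, v i k ≤ U)
    (hUpos : 0 < U) (r : ℕ → ℝ) (hr : ∀ k, r k ∈ Set.Ioc (0 : ℝ) (1 / 2))
    (hδ : δ ≤ U * ∏ m ∈ range n, r m) :
    ∃ z : ι → ℤ, (∀ k, |z k| ≤ 1) ∧ z ≠ 0 ∧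
      ∀ i, |∑ k, v i k * (z k : ℝ)| ≤ Fintype.card ι * (4 * U * r i) := by
  have hΔ : ∀ i : Fin n, 0 < 4 * U * r i := fun i => by have := (hr i).1; positivity
  set A : Fin n → ι → ℝ := fun i k => ⌊v i k / (4 * U * r i)⌋ * (4 * U * r i)
  have hA0 : ∀ i k, 0 ≤ A i k := fun i k => mul_nonneg
    (Int.cast_nonneg_iff.mpr (Int.floor_nonneg.mpr (div_nonneg (hv i k).1 (hΔ i).le))) (hΔ i).le
  have hAv : ∀ i k, 0 ≤ v i k - A i k := fun i k => Int.sub_floor_div_mul_nonneg _ (hΔ i)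
  have hvA : ∀ i k, v i k - A i k ≤ 4 * U * r i := fun i k =>
    (Int.sub_floor_div_mul_lt _ (hΔ i)).le
  obtain ⟨z, hz1, hz0, hz⟩ := h.exists_forall_sum_mul_eq_zero A
    (fun i k => ⟨hA0 i k, by linarith [hAv i k, (hv i k).2]⟩)
    (fun i => (sum_le_sum fun k _ => by linarith [hAv i k]).trans (hU i)) hUpos r hr
    (fun i k => ⟨_, mul_comm _ _⟩) hδ
  refine ⟨z, hz1, hz0, fun i =>
    abs_sum_mul_le_card_mul_of_sum_mul_eq_zero z hz1 (hz i) fun k => ?_⟩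
  rw [abs_of_nonneg (hAv i k)]
  exact hvA i k

theorem exists_int_forall_abs_sum_le {n m : ℕ}
    (h : HasSignBalancing (Fin n × Fin m) δ) (hn : 0 < n) (a : Fin n → Fin n → ℝ)
    (ha : ∀ i j, a i j ∈ Set.Icc (0 : ℝ) 1) (r : ℕ → ℝ) (hr : ∀ k, r k ∈ Set.Ioc (0 : ℝ) (1 / 2))
    (hδ : δ ≤ ∏ k ∈ range n, r k) :
    ∃ x : Fin n → ℤ, x ≠ 0 ∧
      ∀ i, |∑ j, (x j : ℝ) * a i j| ≤ 4 * n ^ 2 * m * 2 ^ m * r i := by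
  have h2m : (0 : ℝ) < 2 ^ m := by positivity
  set v : Fin n → Fin n × Fin m → ℝ := fun i p => 2 * 2 ^ (p.2 : ℕ) * a i p.1 / 2 ^ m
  have hbits : ∑ b : Fin m, (2 : ℝ) ^ (b : ℕ) ≤ 2 ^ m := by
    rw [Fin.sum_univ_eq_sum_range (fun b => (2 : ℝ) ^ b)]
    linarith [geom_sum_mul (2 : ℝ) m]
  have hv : ∀ i p, v i p ∈ Set.Icc (0 : ℝ) 1 := fun i p => by
    have hb : 2 * (2 : ℝ) ^ (p.2 : ℕ) ≤ 2 ^ m := by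
      rw [← pow_succ']; exact pow_le_pow_right₀ (by norm_num) p.2.isLt
    refine ⟨by have := (ha i p.1).1; positivity, ?_⟩
    rw [div_le_one h2m]
    exact (mul_le_of_le_one_right (by positivity) (ha i p.1).2).trans hb
  have hU : ∀ i, ∑ p, v i p ≤ 2 * n := fun i => by
    calc ∑ p, v i p ≤ ∑ p : Fin n × Fin m, 2 * 2 ^ (p.2 : ℕ) / 2 ^ m :=
          sum_le_sum fun p _ => div_le_div_of_nonneg_right
            (mul_le_of_le_one_right (by positivity) (ha i p.1).2) h2m.le
      _ = n * (2 * (∑ b : Fin m, (2 : ℝ) ^ (b : ℕ)) / 2 ^ m) := by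
          rw [Fintype.sum_prod_type]; simp [mul_sum, sum_div]
      _ ≤ n * 2 := by gcongr; rw [div_le_iff₀ h2m]; linarith
      _ = 2 * n := mul_comm _ _
  have hn1 : (1 : ℝ) ≤ 2 * n := by
    have : (1 : ℝ) ≤ n := by exact_mod_cast hn
    linarith
  have hδ' : δ ≤ 2 * n * ∏ k ∈ range n, r k :=
    hδ.trans (le_mul_of_one_le_left (prod_nonneg fun k _ => (hr k).1.le) hn1)
  obtain ⟨z, hz1, hz0, hz⟩ :=
    h.exists_forall_abs_sum_le v hv hU (by linarith) r hr hδ'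
  obtain ⟨x, hx0, hx⟩ := exists_ne_zero_sum_mul_eq_sum_two_pow_mul z hz1 hz0
  refine ⟨x, hx0, fun i => ?_⟩
  have hscale : ∑ j, (x j : ℝ) * a i j = 2 ^ m / 2 * ∑ p, v i p * z p := by
    rw [hx, mul_sum]
    exact sum_congr rfl fun p _ => by simp only [v]; field_simp
  rw [hscale, abs_mul, abs_of_pos (by positivity)]
  calc 2 ^ m / 2 * |∑ p, v i p * z p|
      ≤ 2 ^ m / 2 * (Fintype.card (Fin n × Fin m) * (4 * (2 * n) * r i)) := by gcongr; exact hz i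
    _ = 4 * n ^ 2 * m * 2 ^ m * r i := by simp; ring

end HasSignBalancing

theorem prod_range_ofNat_mul {n : ℕ} [NeZero n] (f : Fin n → ℝ) (s : ℝ) :
    ∏ k ∈ range n, f (Fin.ofNat n k) * s = (∏ i, f i) * s ^ n := by
  rw [← Fin.prod_univ_eq_prod_range, prod_mul_distrib, prod_const, card_univ, Fintype.card_fin]
  simp only [Fin.ofNat_val_eq_self]

theorem mul_div_two_pow_le_half {n : ℕ} (hn : 1 ≤ n) {l ρ : ℝ} (hl : l ≤ 2 ^ n) (hρ0 : 0 ≤ ρ)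
    (hρ : ρ ≤ 2 ^ (2 * n)) : l * (ρ / 2 ^ (4 * n)) ≤ 1 / 2 := by
  have h3n : l * ρ ≤ 2 ^ (3 * n) := by
    rw [show 3 * n = n + 2 * n by ring, pow_add]
    exact mul_le_mul hl hρ hρ0 (by positivity)
  have h4n : 2 * (2 : ℝ) ^ (3 * n) ≤ 2 ^ (4 * n) := by
    rw [← pow_succ']; exact pow_le_pow_right₀ (by norm_num) (by omega)
  rw [← mul_div_assoc, div_le_iff₀ (by positivity)]
  linarith

/-- **Generalized number balancing from a number balancing oracle (Theorem 3.1), existence form.**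
Let `n ≥ 1` and `0 < ρ₀ ≤ 2^{2n²}`. If for every `c ∈ [0,2]^{4n²}` there is a nonzero sign
vector `z` with `|⟨c,z⟩| ≤ ρ₀ 2^{-4n²}`, then for all `a₁, …, aₙ ∈ [0,1]ⁿ` and
`0 < λ₁ ≤ ⋯ ≤ λₙ ≤ 2ⁿ` with `∏ λᵢ ≥ 1`, there is a nonzero `x ∈ ℤⁿ` with
`|⟨x,aᵢ⟩| ≤ 32 n⁴ λᵢ ρ₀^{1/n}` for all `i`. -/
theorem generalized_balancing (n : ℕ) (hn : 1 ≤ n)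
    (ρ₀ : ℝ) (hρ₀pos : 0 < ρ₀) (hρ₀ : ρ₀ ≤ (2 : ℝ) ^ (2 * n ^ 2))
    (hbal : ∀ c : Fin (4 * n ^ 2) → ℝ, (∀ i, c i ∈ Set.Icc (0:ℝ) 2) →
      ∃ z : Fin (4 * n ^ 2) → ℤ, (∀ i, |z i| ≤ 1) ∧ z ≠ 0 ∧
        |∑ i, c i * (z i : ℝ)| ≤ ρ₀ / (2 : ℝ) ^ (4 * n ^ 2)) :
    ∀ a : Fin n → (Fin n → ℝ), (∀ i j, a i j ∈ Set.Icc (0:ℝ) 1) →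
    ∀ lam : Fin n → ℝ, (∀ i, 0 < lam i) → Monotone lam → (∀ i, lam i ≤ (2 : ℝ) ^ n) →
      1 ≤ ∏ i, lam i →
      ∃ x : Fin n → ℤ, x ≠ 0 ∧
        ∀ i, |∑ j, (x j : ℝ) * a i j| ≤ 32 * (n : ℝ) ^ 4 * lam i * ρ₀ ^ ((n : ℝ)⁻¹) := by
  intro a ha lam hlam0 _ hlamle hlamprod
  have : NeZero n := ⟨by omega⟩
  set ρ := ρ₀ ^ ((n : ℝ)⁻¹)
  have hρpos : 0 < ρ := Real.rpow_pos_of_pos hρ₀pos _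
  have hρn : ρ ^ n = ρ₀ := Real.rpow_inv_natCast_pow hρ₀pos.le (NeZero.ne n)
  have hρle : ρ ≤ 2 ^ (2 * n) := by
    rw [← pow_le_pow_iff_left₀ hρpos.le (by positivity) (NeZero.ne n), hρn, ← pow_mul]
    simpa [sq, mul_assoc] using hρ₀
  -- `Fin.ofNat` wraps indices around; only `r 0, …, r (n - 1)` matter.
  set r : ℕ → ℝ := fun k => lam (Fin.ofNat n k) * (ρ / 2 ^ (4 * n))
  have hr : ∀ k, r k ∈ Set.Ioc (0 : ℝ) (1 / 2) := fun k =>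
    ⟨by have := hlam0 (Fin.ofNat n k); positivity,
      mul_div_two_pow_le_half hn (hlamle _) hρpos.le hρle⟩
  have hδ : ρ₀ / 2 ^ (4 * n ^ 2) ≤ ∏ k ∈ range n, r k := by
    rw [prod_range_ofNat_mul, div_pow, hρn, ← pow_mul, show 4 * n * n = 4 * n ^ 2 by ring]
    exact le_mul_of_one_le_left (by positivity) hlamprod
  obtain ⟨x, hx0, hx⟩ := (HasSignBalancing.of_equiv (finProdFinEquiv.trans (finCongr (by ring)))
    hbal).exists_int_forall_abs_sum_le (m := 4 * n) (by omega) a ha r hr hδ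
  refine ⟨x, hx0, fun i => (hx i).trans ?_⟩
  have hnR : (1 : ℝ) ≤ n := by exact_mod_cast hn
  have := hlam0 i
  calc 4 * n ^ 2 * ((4 * n : ℕ) : ℝ) * 2 ^ (4 * n) * r i = 16 * n ^ 3 * lam i * ρ := by
        simp only [r, Fin.ofNat_val_eq_self]; push_cast; field_simp; ring
    _ ≤ 32 * n ^ 4 * lam i * ρ := by gcongr <;> norm_num
end

section
/- Let n ≥ 2, k ≥ 1, and δ > 0. Suppose that for every c ∈ [0,2]^n there exists z ∈ {-1,0,1}^n \ {0} with |⟨c,z⟩| ≤ δ. Then for all vectors a_1, …, a_k ∈ [0,1]^n and all reals δ_1, …, δ_k ∈ (0, 1/2] with Π_{i=1}^k δ_i ≥ δ, there exists x ∈ {-1,0,1}^n \ {0} such that |⟨a_i, x⟩| ≤ 2n²·δ_i for all i = 1, …, k. -/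
/-!
Round each `aᵢ` down to a multiple of `Dᵢ = 2nδᵢ`, i.e. `aᵢ = Dᵢ bᵢ + rᵢ` with `bᵢ` a nonnegative
integer vector and `0 ≤ rᵢ < Dᵢ`. With the prefix products `wᵢ = δ₁⋯δᵢ` the vector
`c = 2n ∑ wᵢ bᵢ` lies in `[0,2]ⁿ`, and the sign vector `z` given for `c` has
`⟨c,z⟩ = 2n ∑ wᵢ mᵢ` with integers `mᵢ = ⟨bᵢ,z⟩` satisfying `|mᵢ| δᵢ ≤ 1/2`. Because every
`δᵢ ≤ 1/2`, the tail `∑_{i > i₀} wᵢ mᵢ` is smaller than `w_{i₀}` by at least `w_k`, so a nonzero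
`mᵢ` would force `|⟨c,z⟩| ≥ 2n w_k > δ`. Hence all `mᵢ` vanish and `|⟨aᵢ,z⟩| = |⟨rᵢ,z⟩| ≤ n Dᵢ`.
-/

open Finset

namespace Fin

lemma partialProd_nonneg {k : ℕ} {e : Fin k → ℝ} (he : ∀ i, 0 ≤ e i) (i : Fin (k + 1)) :
    0 ≤ partialProd e i := by
  induction i using Fin.induction with
  | zero => simp
  | succ i ih => rw [partialProd_succ]; exact mul_nonneg ih (he i)

lemma sum_partialProd_succ_mul {R : Type*} [CommSemiring R] {k : ℕ} (e r : Fin (k + 1) → R) :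
    ∑ i, partialProd e i.succ * r i =
      e 0 * (r 0 + ∑ i : Fin k, partialProd (tail e) i.succ * r i.succ) := by
  simp [sum_univ_succ, partialProd_succ', mul_add, mul_sum, mul_assoc]

end Fin

lemma abs_sum_partialProd_succ_mul_le {k : ℕ} (e : Fin k → ℝ)
    (he : ∀ i, e i ∈ Set.Icc (0:ℝ) (1/2)) (r : Fin k → ℝ) (ε : ℝ) (hr : ∀ i, |r i| * e i ≤ ε) :
    |∑ i, Fin.partialProd e i.succ * r i| ≤ 2 * ε * (1 - ∏ i, e i) := by
  induction k with
  | zero => simp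
  | succ k ih =>
    obtain ⟨he₀, he₀'⟩ := he 0
    have hε : 0 ≤ ε := (mul_nonneg (abs_nonneg _) he₀).trans (hr 0)
    have htail := ih (Fin.tail e) (fun i => he i.succ) (fun i => r i.succ) (fun i => hr i.succ)
    rw [Fin.sum_partialProd_succ_mul, Fin.prod_univ_succ, abs_mul, abs_of_nonneg he₀]
    calc e 0 * |r 0 + ∑ i : Fin k, Fin.partialProd (Fin.tail e) i.succ * r i.succ|
        ≤ e 0 * (|r 0| + 2 * ε * (1 - ∏ i, Fin.tail e i)) :=
          mul_le_mul_of_nonneg_left ((abs_add_le _ _).trans (by gcongr)) he₀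
      _ ≤ 2 * ε * (1 - e 0 * ∏ i : Fin k, e i.succ) := by
          have := hr 0
          change _ ≤ 2 * ε * (1 - e 0 * ∏ i, Fin.tail e i)
          have hP : 0 ≤ ∏ i, Fin.tail e i := prod_nonneg fun i _ => (he i.succ).1
          nlinarith [mul_nonneg hε hP]

lemma eq_zero_of_abs_sum_partialProd_succ_mul_lt {k : ℕ} (e : Fin k → ℝ)
    (he : ∀ i, e i ∈ Set.Ioc (0:ℝ) (1/2)) (m : Fin k → ℤ) (hm : ∀ i, |(m i : ℝ)| * e i ≤ 1/2)
    (h : |∑ i, Fin.partialProd e i.succ * m i| < ∏ i, e i) : m = 0 := by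
  induction k with
  | zero => exact Subsingleton.elim _ _
  | succ k ih =>
    have he₀ := (he 0).1
    set S := ∑ i : Fin k, Fin.partialProd (Fin.tail e) i.succ * (m i.succ : ℝ)
    have hS : |S| ≤ 1 - ∏ i, Fin.tail e i := by
      simpa using abs_sum_partialProd_succ_mul_le (Fin.tail e)
        (fun i => Set.Ioc_subset_Icc_self (he i.succ)) (fun i => (m i.succ : ℝ)) (1/2)
        (fun i => hm i.succ)
    have h' : |m 0 + S| < ∏ i, Fin.tail e i := by
      rw [Fin.sum_partialProd_succ_mul, Fin.prod_univ_succ, abs_mul, abs_of_pos he₀] at h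
      exact lt_of_mul_lt_mul_left h he₀.le
    have hm₀ : m 0 = 0 := by
      have : |(m 0 : ℝ)| < 1 := by
        have := abs_sub ((m 0 : ℝ) + S) S
        rw [add_sub_cancel_right] at this
        linarith
      exact Int.abs_lt_one_iff.mp (by exact_mod_cast this)
    have hsucc := ih (Fin.tail e) (fun i => he i.succ) (fun i => m i.succ) (fun i => hm i.succ)
      (by simpa [hm₀] using h')
    ext i
    exact Fin.cases hm₀ (fun i => congrFun hsucc i) i

lemma abs_sum_mul_intCast_le {ι : Type*} [Fintype ι] (v : ι → ℝ) (z : ι → ℤ)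
    (hz : ∀ j, |z j| ≤ 1) {B : ℝ} (hv : ∀ j, |v j| ≤ B) :
    |∑ j, v j * z j| ≤ Fintype.card ι * B := by
  calc |∑ j, v j * z j| ≤ ∑ j, |v j * z j| := abs_sum_le_sum_abs _ _
    _ ≤ ∑ _j : ι, B := sum_le_sum fun j _ => by
        rw [abs_mul]
        have : |(z j : ℝ)| ≤ 1 := by exact_mod_cast hz j
        nlinarith [abs_nonneg (v j), abs_nonneg (z j : ℝ), hv j]
    _ = Fintype.card ι * B := by simp

lemma exists_sign_vector_forall_sum_mul_eq_zero {n k : ℕ} (hn : 0 < n) {δ : ℝ}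
    (hbal : ∀ c : Fin n → ℝ, (∀ i, c i ∈ Set.Icc (0:ℝ) 2) →
      ∃ z : Fin n → ℤ, (∀ i, |z i| ≤ 1) ∧ z ≠ 0 ∧ |∑ i, c i * (z i : ℝ)| ≤ δ)
    (d : Fin k → ℝ) (hd : ∀ i, d i ∈ Set.Ioc (0:ℝ) (1/2)) (hprod : δ ≤ ∏ i, d i)
    (b : Fin k → Fin n → ℤ) (hb : ∀ i j, 0 ≤ b i j ∧ 2 * n * d i * b i j ≤ 1) :
    ∃ z : Fin n → ℤ, (∀ j, |z j| ≤ 1) ∧ z ≠ 0 ∧ ∀ i, ∑ j, b i j * z j = 0 := by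
  have hn' : (1:ℝ) ≤ n := by exact_mod_cast hn
  have hd' : ∀ i, d i ∈ Set.Icc (0:ℝ) (1/2) := fun i => Set.Ioc_subset_Icc_self (hd i)
  set c : Fin n → ℝ := fun j => ∑ i, Fin.partialProd d i.succ * (2 * n * b i j)
  have hc : ∀ j, c j ∈ Set.Icc (0:ℝ) 2 := by
    intro j
    have hb' : ∀ i, 0 ≤ (b i j : ℝ) := fun i => by exact_mod_cast (hb i j).1
    refine ⟨sum_nonneg fun i _ => mul_nonneg (Fin.partialProd_nonneg (fun l => (hd' l).1) _)
      (mul_nonneg (by positivity) (hb' i)), ?_⟩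
    have := abs_sum_partialProd_succ_mul_le d hd' (fun i => 2 * n * b i j) 1 fun i => by
      rw [abs_of_nonneg (mul_nonneg (by positivity) (hb' i))]; linarith [(hb i j).2]
    have := prod_nonneg fun i (_ : i ∈ univ) => (hd' i).1
    linarith [le_abs_self (c j)]
  obtain ⟨z, hz, hz0, hcz⟩ := hbal c hc
  refine ⟨z, hz, hz0, ?_⟩
  set m : Fin k → ℤ := fun i => ∑ j, b i j * z j
  have hm : ∀ i, |(m i : ℝ)| * d i ≤ 1/2 := by
    intro i
    have := abs_sum_mul_intCast_le (fun j => 2 * n * d i * b i j) z hz (B := 1) fun j => by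
      rw [abs_of_nonneg (by have := (hb i j).1; have := (hd i).1; positivity)]
      exact (hb i j).2
    have hm_cast : (m i : ℝ) = ∑ j, (b i j : ℝ) * z j := by simp [m]
    simp only [Fintype.card_fin, mul_one, mul_assoc, ← mul_sum, ← hm_cast, abs_mul,
      abs_of_pos (hd i).1, abs_two, Nat.abs_cast] at this
    nlinarith
  have hsum : ∑ j, c j * z j = 2 * n * ∑ i, Fin.partialProd d i.succ * m i := by
    simp only [c, m, Int.cast_sum, Int.cast_mul, sum_mul, mul_sum]
    rw [sum_comm]
    exact sum_congr rfl fun i _ => sum_congr rfl fun j _ => by ring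
  have hlt : |∑ i, Fin.partialProd d i.succ * m i| < ∏ i, d i := by
    have hpos : 0 < ∏ i, d i := prod_pos fun i _ => (hd i).1
    rw [hsum, abs_mul, abs_of_pos (by positivity)] at hcz
    nlinarith [abs_nonneg (∑ i, Fin.partialProd d i.succ * m i)]
  exact fun i => congrFun (eq_zero_of_abs_sum_partialProd_succ_mul_lt d hd m hm hlt) i

theorem multi_vector_balancing_general (n k : ℕ) (hn : 2 ≤ n) (δ : ℝ)
    (hbal : ∀ c : Fin n → ℝ, (∀ i, c i ∈ Set.Icc (0:ℝ) 2) →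
      ∃ z : Fin n → ℤ, (∀ i, |z i| ≤ 1) ∧ z ≠ 0 ∧ |∑ i, c i * (z i : ℝ)| ≤ δ) :
    ∀ a : Fin k → (Fin n → ℝ), (∀ i j, a i j ∈ Set.Icc (0:ℝ) 1) →
    ∀ d : Fin k → ℝ, (∀ i, d i ∈ Set.Ioc (0:ℝ) (1/2)) → δ ≤ ∏ i, d i →
      ∃ x : Fin n → ℤ, (∀ j, |x j| ≤ 1) ∧ x ≠ 0 ∧
        ∀ i, |∑ j, a i j * (x j : ℝ)| ≤ 2 * (n : ℝ) ^ 2 * d i := by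
  intro a ha d hd hprod
  have hn₀ : 0 < n := by omega
  have hD : ∀ i, 0 < 2 * (n : ℝ) * d i := fun i => by have := (hd i).1; positivity
  set b : Fin k → Fin n → ℤ := fun i j => ⌊a i j / (2 * n * d i)⌋
  obtain ⟨z, hz, hz0, hbz⟩ :=
    exists_sign_vector_forall_sum_mul_eq_zero hn₀ hbal d hd hprod b fun i j =>
      ⟨Int.floor_nonneg.2 (div_nonneg (ha i j).1 (hD i).le), by
        linarith [Int.sub_floor_div_mul_nonneg (a i j) (hD i), (ha i j).2]⟩
  refine ⟨z, hz, hz0, fun i => ?_⟩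
  have hround : ∑ j, a i j * z j = ∑ j, (a i j - b i j * (2 * n * d i)) * z j := by
    have : ∑ j, (b i j : ℝ) * z j = 0 := by exact_mod_cast hbz i
    simp only [sub_mul, sum_sub_distrib, mul_right_comm _ (2 * (n : ℝ) * d i), ← sum_mul, this,
      zero_mul, sub_zero]
  calc |∑ j, a i j * z j| = |∑ j, (a i j - b i j * (2 * n * d i)) * z j| := by rw [hround]
    _ ≤ n * (2 * n * d i) := by
        simpa using abs_sum_mul_intCast_le _ z hz fun j => abs_le.2
          ⟨by linarith [Int.sub_floor_div_mul_nonneg (a i j) (hD i), hD i],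
            (Int.sub_floor_div_mul_lt (a i j) (hD i)).le⟩
    _ = 2 * n ^ 2 * d i := by ring

/-- **Balancing several vectors simultaneously (Lemma 3.2), existence form.**
Let `n ≥ 2`, `k ≥ 1`, `δ > 0`. If for every `c ∈ [0,2]ⁿ` there is a nonzero sign vector `z`
with `|⟨c,z⟩| ≤ δ`, then for all `a₁, …, a_k ∈ [0,1]ⁿ` and `δ₁, …, δ_k ∈ (0,1/2]` with
`∏ δᵢ ≥ δ`, there is a nonzero sign vector `x` with `|⟨aᵢ,x⟩| ≤ 2n²δᵢ` for all `i`. -/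
theorem multi_vector_balancing (n k : ℕ) (hn : 2 ≤ n) (hk : 1 ≤ k)
    (δ : ℝ) (hδ : 0 < δ)
    (hbal : ∀ c : Fin n → ℝ, (∀ i, c i ∈ Set.Icc (0:ℝ) 2) →
      ∃ z : Fin n → ℤ, (∀ i, |z i| ≤ 1) ∧ z ≠ 0 ∧ |∑ i, c i * (z i : ℝ)| ≤ δ) :
    ∀ a : Fin k → (Fin n → ℝ), (∀ i j, a i j ∈ Set.Icc (0:ℝ) 1) →
    ∀ d : Fin k → ℝ, (∀ i, d i ∈ Set.Ioc (0:ℝ) (1/2)) → δ ≤ ∏ i, d i →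
      ∃ x : Fin n → ℤ, (∀ j, |x j| ≤ 1) ∧ x ≠ 0 ∧
        ∀ i, |∑ j, a i j * (x j : ℝ)| ≤ 2 * (n : ℝ) ^ 2 * d i :=
  multi_vector_balancing_general n k hn δ hbal
end

section
/- Let b_1, …, b_n be linearly independent vectors in ℝ^n with Gram–Schmidt orthogonalization b̂_1, …, b̂_n and coefficients μ_{ij} = ⟨b_j, b̂_i⟩/‖b̂_i‖₂². Assume |μ_{ij}| ≤ 1/2 for all 1 ≤ i < j ≤ n, ‖b̂_i‖₂² ≤ 2·‖b̂_{i+1}‖₂² for all i = 1,…,n−1, and ‖b_i‖₂ ≥ 1 for all i. Then for every x ∈ ℝ^n, ‖Σ_{i=1}^n x_i b_i‖₂ ≥ 2^{−3n/2}·‖x‖₂. -/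
/-!
Write `b j = b̂ j + ∑_{i<j} μ i j • b̂ i`. The `b̂ i` are pairwise orthogonal, so
`‖∑ xᵢ bᵢ‖² = ∑ yᵢ² ‖b̂ᵢ‖²` with `yᵢ = xᵢ + ∑_{j>i} μ i j xⱼ`. Chaining the Lovász condition
gives `‖b̂₀‖² ≤ 2^i ‖b̂ᵢ‖²`, and `b̂₀ = b₀` has norm at least `1`, so `‖b̂ᵢ‖² ≥ 2⁻ⁿ`.
Solving the unitriangular system `y = x + μ x` backwards with `|μ i j| ≤ 1/2` gives
`|xᵢ| ≤ (3/2)^(n-1-i) ‖y‖`, hence `‖x‖² ≤ (9/4)ⁿ ‖y‖²`. Altogether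
`‖x‖² ≤ (9/2)ⁿ ‖∑ xᵢ bᵢ‖² ≤ 8ⁿ ‖∑ xᵢ bᵢ‖²`.
-/

open Finset Matrix

section Orthogonality

variable {ι κ : Type*} [Fintype ι] [Fintype κ]

theorem sum_sq_eq_dotProduct_self (v : κ → ℝ) : ∑ t, v t ^ 2 = v ⬝ᵥ v := by
  simp only [dotProduct, sq]

theorem sum_smul_dotProduct_self_of_pairwise {v : ι → κ → ℝ}
    (hv : Pairwise fun i j => v i ⬝ᵥ v j = 0) (c : ι → ℝ) :
    (∑ i, c i • v i) ⬝ᵥ (∑ i, c i • v i) = ∑ i, c i ^ 2 * (v i ⬝ᵥ v i) := by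
  simp only [sum_dotProduct, dotProduct_sum, smul_dotProduct, dotProduct_smul, smul_eq_mul]
  refine sum_congr rfl fun i _ => ?_
  rw [sum_eq_single i (fun j _ hji => by rw [hv hji, mul_zero])
    (fun h => absurd (mem_univ i) h)]
  ring

theorem dotProduct_div_dotProduct_self_mul (u v : κ → ℝ) :
    (v ⬝ᵥ u) / (u ⬝ᵥ u) * (u ⬝ᵥ u) = u ⬝ᵥ v := by
  rcases eq_or_ne u 0 with rfl | hu
  · simp
  · rw [div_mul_cancel₀ _ (dotProduct_self_eq_zero.not.mpr hu), dotProduct_comm]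

end Orthogonality

section GramSchmidt

variable {ι : Type*} [Fintype ι] [LinearOrder ι]

theorem gramSchmidt_pairwise_orthogonal {κ : Type*} [Fintype κ] {b bhat : ι → κ → ℝ}
    {μ : ι → ι → ℝ}
    (hμ : ∀ i j, i < j → μ i j = (b j ⬝ᵥ bhat i) / (bhat i ⬝ᵥ bhat i))
    (hgs : ∀ j, bhat j = b j - ∑ i ∈ {i | i < j}, μ i j • bhat i) :
    Pairwise fun i j => bhat i ⬝ᵥ bhat j = 0 := by
  suffices h : ∀ j, ∀ i < j, bhat i ⬝ᵥ bhat j = 0 by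
    intro i j hij
    rcases hij.lt_or_gt with hij | hji
    · exact h j i hij
    · rw [dotProduct_comm]; exact h i j hji
  intro j
  induction j using WellFoundedLT.induction with
  | ind j ih =>
    intro i hij
    have earlier : ∀ k ∈ ({k | k < j} : Finset ι), k ≠ i → μ k j * (bhat i ⬝ᵥ bhat k) = 0 := by
      intro k hk hki
      rcases hki.lt_or_gt with hki | hik
      · rw [dotProduct_comm, ih i hij k hki, mul_zero]
      · rw [ih k (by simpa using hk) i hik, mul_zero]
    rw [hgs j, dotProduct_sub, dotProduct_sum]
    simp only [dotProduct_smul, smul_eq_mul]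
    rw [sum_eq_single_of_mem i (by simpa using hij) earlier, hμ i j hij,
      dotProduct_div_dotProduct_self_mul, sub_self]

theorem sum_smul_eq_sum_smul_gramSchmidt {R E : Type*} [CommRing R] [AddCommGroup E]
    [Module R E] {b bhat : ι → E} {μ : ι → ι → R}
    (hgs : ∀ j, bhat j = b j - ∑ i ∈ {i | i < j}, μ i j • bhat i) (x : ι → R) :
    ∑ j, x j • b j = ∑ i, (x i + ∑ j ∈ {j | i < j}, μ i j * x j) • bhat i := by
  have hb : ∀ j, b j = bhat j + ∑ i ∈ {i | i < j}, μ i j • bhat i := fun j => by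
    rw [hgs j, sub_add_cancel]
  simp only [hb, smul_add, sum_add_distrib, add_smul, smul_sum, sum_smul, sum_filter]
  rw [sum_comm (s := univ) (t := univ)]
  simp only [smul_ite, ite_smul, smul_zero, zero_smul, smul_smul, mul_comm]

end GramSchmidt

theorem le_pow_sub_mul_of_le_mul_succ {n : ℕ} {f : Fin n → ℝ} {c : ℝ} (hc : 0 ≤ c)
    (hf : ∀ i : Fin n, ∀ h : i.val + 1 < n, f i ≤ c * f ⟨i.val + 1, h⟩) {i j : Fin n}
    (hij : i ≤ j) : f i ≤ c ^ (j.val - i.val) * f j := by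
  obtain ⟨d, hd⟩ := Nat.exists_eq_add_of_le (Fin.le_def.mp hij)
  induction d generalizing j with
  | zero => simp [Fin.ext hd.symm]
  | succ d ih =>
    have hk : i.val + d < n := by omega
    have hnext : (⟨i.val + d + 1, by omega⟩ : Fin n) = j := Fin.ext hd.symm
    calc f i ≤ c ^ d * f ⟨i.val + d, hk⟩ := by
          simpa using ih (j := ⟨i.val + d, hk⟩) (Fin.le_def.mpr (Nat.le_add_right _ _)) rfl
      _ ≤ c ^ d * (c * f j) := by gcongr; exact hnext ▸ hf ⟨i.val + d, hk⟩ _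
      _ = c ^ (j.val - i.val) * f j := by rw [hd, Nat.add_sub_cancel_left, pow_succ, mul_assoc]

theorem one_add_mul_sum_Ioi_pow {n : ℕ} (a : ℝ) (i : Fin n) :
    1 + a * ∑ j ∈ Ioi i, (1 + a) ^ (n - 1 - j.val) = (1 + a) ^ (n - 1 - i.val) := by
  have hreindex : ∑ j ∈ Ioi i, (1 + a) ^ (n - 1 - j.val) =
      ∑ k ∈ range (n - 1 - i.val), (1 + a) ^ k := by
    have hmap := sum_map (Ioi i) Fin.valEmbedding (fun k => (1 + a) ^ (n - 1 - k))
    simp only [Fin.valEmbedding_apply] at hmap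
    rw [← hmap, Fin.map_valEmbedding_Ioi, ← Ico_add_one_left_eq_Ioo, sum_Ico_eq_sum_range,
      ← sum_range_reflect]
    exact sum_congr (by congr 1; omega) fun k hk => by rw [mem_range] at hk; congr 1; omega
  have hgeom := geom_sum_mul (1 + a) (n - 1 - i.val)
  rw [add_sub_cancel_left] at hgeom
  rw [hreindex]
  linarith

theorem abs_le_pow_mul_of_eq_add_sum_mul {n : ℕ} {x y : Fin n → ℝ} {U : Fin n → Fin n → ℝ}
    {a M : ℝ} (ha : 0 ≤ a) (hU : ∀ i j, i < j → |U i j| ≤ a) (hy : ∀ i, |y i| ≤ M)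
    (hxy : ∀ i, y i = x i + ∑ j ∈ {j | i < j}, U i j * x j) (i : Fin n) :
    |x i| ≤ (1 + a) ^ (n - 1 - i.val) * M := by
  induction i using WellFoundedGT.induction with
  | ind i ih =>
    have hxi : x i = y i - ∑ j ∈ Ioi i, U i j * x j := by
      rw [hxy i, filter_lt_eq_Ioi, add_sub_cancel_right]
    calc |x i| ≤ |y i| + ∑ j ∈ Ioi i, |U i j| * |x j| := by
          rw [hxi]
          refine (abs_sub (y i) _).trans ?_
          gcongr
          simpa only [abs_mul] using abs_sum_le_sum_abs (fun j => U i j * x j) (Ioi i)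
      _ ≤ M + ∑ j ∈ Ioi i, a * ((1 + a) ^ (n - 1 - j.val) * M) := by
          gcongr with j hj
          · exact hy i
          · exact hU i j (mem_Ioi.mp hj)
          · exact ih j (mem_Ioi.mp hj)
      _ = (1 + a) ^ (n - 1 - i.val) * M := by
          rw [← mul_sum, ← sum_mul, ← one_add_mul_sum_Ioi_pow a i]
          ring

theorem sum_sq_le_of_eq_add_sum_mul {n : ℕ} {x y : Fin n → ℝ} {U : Fin n → Fin n → ℝ}
    (hU : ∀ i j, i < j → |U i j| ≤ 1 / 2)
    (hxy : ∀ i, y i = x i + ∑ j ∈ {j | i < j}, U i j * x j) :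
    ∑ i, x i ^ 2 ≤ (9 / 4) ^ n * ∑ i, y i ^ 2 := by
  set M := √(∑ i, y i ^ 2)
  have hy : ∀ i, |y i| ≤ M := fun i =>
    Real.abs_le_sqrt (single_le_sum (fun j _ => sq_nonneg (y j)) (mem_univ i))
  have hx : ∀ i : Fin n, x i ^ 2 ≤ (9 / 4) ^ (n - 1 - i.val) * M ^ 2 := fun i => by
    have h := abs_le_pow_mul_of_eq_add_sum_mul (by norm_num) hU hy hxy i
    calc x i ^ 2 = |x i| ^ 2 := (sq_abs _).symm
      _ ≤ ((1 + 1 / 2) ^ (n - 1 - i.val) * M) ^ 2 := by gcongr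
      _ = (9 / 4) ^ (n - 1 - i.val) * M ^ 2 := by
          rw [mul_pow, ← pow_mul, mul_comm _ 2, pow_mul]
          norm_num
  have hgeom : ∑ i : Fin n, (9 / 4 : ℝ) ^ (n - 1 - i.val) ≤ (9 / 4) ^ n := by
    have h := geom_sum_mul (9 / 4 : ℝ) n
    rw [Fin.sum_univ_eq_sum_range (fun k => (9 / 4 : ℝ) ^ (n - 1 - k)), sum_range_reflect]
    nlinarith [pow_nonneg (by norm_num : (0 : ℝ) ≤ 9 / 4) n]
  calc ∑ i, x i ^ 2 ≤ ∑ i : Fin n, (9 / 4) ^ (n - 1 - i.val) * M ^ 2 := sum_le_sum fun i _ => hx i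
    _ = (∑ i : Fin n, (9 / 4 : ℝ) ^ (n - 1 - i.val)) * ∑ i, y i ^ 2 := by
        rw [← sum_mul, Real.sq_sqrt (sum_nonneg fun i _ => sq_nonneg (y i))]
    _ ≤ (9 / 4) ^ n * ∑ i, y i ^ 2 := by gcongr

theorem one_le_two_pow_mul_dotProduct_self_of_lovasz {n : ℕ} {κ : Type*} [Fintype κ]
    {b bhat : Fin n → κ → ℝ} {μ : Fin n → Fin n → ℝ}
    (hgs : ∀ j, bhat j = b j - ∑ i ∈ {i | i < j}, μ i j • bhat i)
    (hLov : ∀ i : Fin n, ∀ h : i.val + 1 < n,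
      bhat i ⬝ᵥ bhat i ≤ 2 * (bhat ⟨i.val + 1, h⟩ ⬝ᵥ bhat ⟨i.val + 1, h⟩))
    (i : Fin n) (hb : 1 ≤ b ⟨0, i.pos⟩ ⬝ᵥ b ⟨0, i.pos⟩) :
    1 ≤ 2 ^ i.val * (bhat i ⬝ᵥ bhat i) := by
  have hfirst : bhat ⟨0, i.pos⟩ = b ⟨0, i.pos⟩ := by
    rw [hgs]
    simp [Fin.lt_def]
  calc 1 ≤ bhat ⟨0, i.pos⟩ ⬝ᵥ bhat ⟨0, i.pos⟩ := hfirst ▸ hb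
    _ ≤ 2 ^ (i.val - 0) * (bhat i ⬝ᵥ bhat i) :=
        le_pow_sub_mul_of_le_mul_succ (by norm_num) hLov (Fin.le_def.mpr i.val.zero_le)
    _ = 2 ^ i.val * (bhat i ⬝ᵥ bhat i) := by rw [Nat.sub_zero]

theorem two_rpow_neg_three_mul_div_two_mul_sqrt_le {n : ℕ} {X Y : ℝ}
    (h : X ≤ (9 / 2) ^ n * Y) (hY : 0 ≤ Y) :
    (2 : ℝ) ^ (-(3 * (n : ℝ) / 2)) * √X ≤ √Y := by
  have h2 : (2 : ℝ) ^ (-(3 * (n : ℝ) / 2)) = √((8 ^ n)⁻¹) := by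
    rw [Real.sqrt_eq_rpow, ← Real.rpow_natCast, show (8 : ℝ) = 2 ^ (3 : ℝ) by norm_num,
      ← Real.rpow_mul (by norm_num), ← Real.rpow_neg (by norm_num),
      ← Real.rpow_mul (by norm_num)]
    ring_nf
  rw [h2, ← Real.sqrt_mul (by positivity)]
  refine Real.sqrt_le_sqrt ?_
  calc (8 ^ n)⁻¹ * X ≤ (8 ^ n)⁻¹ * ((9 / 2) ^ n * Y) := by gcongr
    _ = (9 / 16) ^ n * Y := by rw [← inv_pow, ← mul_assoc, ← mul_pow]; norm_num
    _ ≤ Y := mul_le_of_le_one_left hY (pow_le_one₀ (by norm_num) (by norm_num))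

theorem lll_singular_value_bound_general (n : ℕ) (b bhat : Fin n → (Fin n → ℝ))
    (μ : Fin n → Fin n → ℝ)
    (hμdef : ∀ i j : Fin n, i < j →
      μ i j = (∑ t, b j t * bhat i t) / (∑ t, bhat i t ^ 2))
    (hgs : ∀ j : Fin n,
      bhat j = b j - ∑ i ∈ Finset.univ.filter (fun i => i < j), μ i j • bhat i)
    (hred : ∀ i j : Fin n, i < j → |μ i j| ≤ 1 / 2)
    (hLov : ∀ i : Fin n, ∀ h : i.val + 1 < n,
      ∑ t, bhat i t ^ 2 ≤ 2 * ∑ t, bhat ⟨i.val + 1, h⟩ t ^ 2)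
    (hnorm : ∀ i, 1 ≤ Real.sqrt (∑ t, b i t ^ 2)) :
    ∀ x : Fin n → ℝ,
      (2 : ℝ) ^ (-(3 * (n : ℝ) / 2)) * Real.sqrt (∑ t, x t ^ 2) ≤
        Real.sqrt (∑ t, (∑ i, x i * b i t) ^ 2) := by
  intro x
  simp only [sum_sq_eq_dotProduct_self, Real.one_le_sqrt] at hμdef hLov hnorm
  set y := fun i => x i + ∑ j ∈ {j | i < j}, μ i j * x j
  have hBx : (∑ i, x i • b i) ⬝ᵥ (∑ i, x i • b i) = ∑ i, y i ^ 2 * (bhat i ⬝ᵥ bhat i) := by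
    rw [sum_smul_eq_sum_smul_gramSchmidt hgs,
      sum_smul_dotProduct_self_of_pairwise (gramSchmidt_pairwise_orthogonal hμdef hgs)]
  have hlow : ∀ i : Fin n, 1 ≤ 2 ^ n * (bhat i ⬝ᵥ bhat i) := fun i =>
    (one_le_two_pow_mul_dotProduct_self_of_lovasz hgs hLov i (hnorm _)).trans <|
      mul_le_mul_of_nonneg_right (pow_le_pow_right₀ one_le_two i.is_lt.le)
        (sum_nonneg fun t _ => mul_self_nonneg (bhat i t))
  have hy : ∑ i, y i ^ 2 ≤ 2 ^ n * ((∑ i, x i • b i) ⬝ᵥ (∑ i, x i • b i)) := by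
    rw [hBx, mul_sum]
    gcongr with i
    nlinarith [mul_le_mul_of_nonneg_left (hlow i) (sq_nonneg (y i))]
  have hx : ∑ t, x t ^ 2 ≤ (9 / 4) ^ n * ∑ i, y i ^ 2 :=
    sum_sq_le_of_eq_add_sum_mul hred fun i => rfl
  have hcoords : ∑ t, (∑ i, x i * b i t) ^ 2 = (∑ i, x i • b i) ⬝ᵥ (∑ i, x i • b i) := by
    rw [← sum_sq_eq_dotProduct_self]
    simp
  rw [hcoords]
  refine two_rpow_neg_three_mul_div_two_mul_sqrt_le (hx.trans ?_)
    (sum_nonneg fun t _ => mul_self_nonneg _)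
  calc (9 / 4) ^ n * ∑ i, y i ^ 2 ≤ (9 / 4) ^ n * (2 ^ n * _) := by gcongr
    _ = _ := by rw [← mul_assoc, ← mul_pow]; norm_num

/-- **Singular value lower bound for LLL-reduced bases (Lemma 3.4).**
If `b₁, …, bₙ` is an LLL-reduced basis (coefficient-reduced with the Lovász condition)
whose vectors all have ℓ₂-norm at least `1`, then `‖∑ xᵢ bᵢ‖₂ ≥ 2^{-3n/2} ‖x‖₂`
for every `x ∈ ℝⁿ`. -/
theorem lll_singular_value_bound (n : ℕ) (b bhat : Fin n → (Fin n → ℝ))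
    (μ : Fin n → Fin n → ℝ)
    (hli : LinearIndependent ℝ b)
    (hμdef : ∀ i j : Fin n, i < j →
      μ i j = (∑ t, b j t * bhat i t) / (∑ t, bhat i t ^ 2))
    (hgs : ∀ j : Fin n,
      bhat j = b j - ∑ i ∈ Finset.univ.filter (fun i => i < j), μ i j • bhat i)
    (hred : ∀ i j : Fin n, i < j → |μ i j| ≤ 1 / 2)
    (hLov : ∀ i : Fin n, ∀ h : i.val + 1 < n,
      ∑ t, bhat i t ^ 2 ≤ 2 * ∑ t, bhat ⟨i.val + 1, h⟩ t ^ 2)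
    (hnorm : ∀ i, 1 ≤ Real.sqrt (∑ t, b i t ^ 2)) :
    ∀ x : Fin n → ℝ,
      (2 : ℝ) ^ (-(3 * (n : ℝ) / 2)) * Real.sqrt (∑ t, x t ^ 2) ≤
        Real.sqrt (∑ t, (∑ i, x i * b i t) ^ 2) :=
  lll_singular_value_bound_general n b bhat μ hμdef hgs hred hLov hnorm
end

section
/- Let V ∈ ℝ^{n×n} be upper triangular with V_{ii} = 1 for all i and |V_{ij}| ≤ 1/2 for all 1 ≤ i < j ≤ n. Then for every x ∈ ℝ^n, ‖Vx‖∞ ≥ 2^{−n}·‖x‖₂. -/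
/-!
Back substitution: if `‖V x‖∞ ≤ c 2⁻ⁿ`, then downward induction on `k` gives
`|x k| ≤ c 2⁻⁽ᵏ⁺¹⁾`, because `x k = (V x) k - ∑_{j > k} V k j x j` and the tail is at most
`½ c (2⁻⁽ᵏ⁺¹⁾ - 2⁻ⁿ)`. Since `∑ₖ 4⁻⁽ᵏ⁺¹⁾ ≤ 1`, this gives `‖x‖₂ ≤ c`; take `c = 2ⁿ ‖V x‖∞`.
-/

open Finset Matrix

theorem sum_Ico_half_pow_succ {a b : ℕ} (hab : a ≤ b) :
    ∑ j ∈ Ico a b, (1 / 2 : ℝ) ^ (j + 1) = (1 / 2) ^ a - (1 / 2) ^ b := by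
  induction b, hab using Nat.le_induction with
  | base => simp
  | succ b hab ih => rw [sum_Ico_succ_top hab, ih]; ring

theorem Fin.sum_Ioi_half_pow_succ {n : ℕ} (k : Fin n) :
    ∑ j ∈ Ioi k, (1 / 2 : ℝ) ^ ((j : ℕ) + 1) = (1 / 2) ^ ((k : ℕ) + 1) - (1 / 2) ^ n := by
  have hmap := sum_map (Ioi k) Fin.valEmbedding (fun j : ℕ ↦ (1 / 2 : ℝ) ^ (j + 1))
  rw [Fin.map_valEmbedding_Ioi, ← Ico_add_one_left_eq_Ioo,
    sum_Ico_half_pow_succ (a := (k : ℕ) + 1) k.isLt] at hmap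
  exact hmap.symm

theorem Fin.sum_half_pow_succ_le_one (n : ℕ) : ∑ j : Fin n, (1 / 2 : ℝ) ^ ((j : ℕ) + 1) ≤ 1 := by
  rw [Fin.sum_univ_eq_sum_range (fun j ↦ (1 / 2 : ℝ) ^ (j + 1)), range_eq_Ico,
    sum_Ico_half_pow_succ n.zero_le]
  simp

theorem Matrix.mulVec_apply_eq_add_sum_Ioi {ι R : Type*} [Fintype ι] [LinearOrder ι]
    [LocallyFiniteOrderTop ι] [NonAssocSemiring R] {V : Matrix ι ι R} {i : ι}
    (hlower : ∀ j < i, V i j = 0) (hdiag : V i i = 1) (x : ι → R) :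
    (V *ᵥ x) i = x i + ∑ j ∈ Ioi i, V i j * x j := by
  have hIci : ∑ j, V i j * x j = ∑ j ∈ Ici i, V i j * x j :=
    (sum_subset (subset_univ _) fun j _ hj ↦ by
      rw [hlower j (by simpa using hj), zero_mul]).symm
  rw [mulVec, dotProduct, hIci, ← sum_Ioi_add_eq_sum_Ici, hdiag, one_mul, add_comm]

theorem sqrt_sum_sq_le_of_abs_le_half_pow {n : ℕ} {x : Fin n → ℝ} {c : ℝ} (hc : 0 ≤ c)
    (hx : ∀ k, |x k| ≤ c * (1 / 2) ^ ((k : ℕ) + 1)) : √(∑ k, x k ^ 2) ≤ c := by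
  refine Real.sqrt_le_iff.mpr ⟨hc, ?_⟩
  calc ∑ k, x k ^ 2 ≤ ∑ k : Fin n, c ^ 2 * (1 / 2) ^ ((k : ℕ) + 1) := by
        gcongr with k
        have hw : ((1 / 2 : ℝ) ^ ((k : ℕ) + 1)) ^ 2 ≤ (1 / 2) ^ ((k : ℕ) + 1) :=
          pow_le_of_le_one (by positivity) (pow_le_one₀ (by norm_num) (by norm_num)) two_ne_zero
        calc x k ^ 2 = |x k| ^ 2 := (sq_abs _).symm
          _ ≤ (c * (1 / 2) ^ ((k : ℕ) + 1)) ^ 2 := by gcongr; exact hx k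
          _ ≤ c ^ 2 * (1 / 2) ^ ((k : ℕ) + 1) := by rw [mul_pow]; gcongr
    _ ≤ c ^ 2 := by
        rw [← mul_sum]
        exact mul_le_of_le_one_right (sq_nonneg c) (Fin.sum_half_pow_succ_le_one n)

theorem Matrix.abs_le_of_norm_mulVec_le {n : ℕ} {V : Matrix (Fin n) (Fin n) ℝ}
    (hlower : ∀ i j : Fin n, j < i → V i j = 0) (hdiag : ∀ i : Fin n, V i i = 1)
    (hoff : ∀ i j : Fin n, i < j → |V i j| ≤ 1 / 2) {x : Fin n → ℝ} {c : ℝ}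
    (hc : ‖V *ᵥ x‖ ≤ c * (1 / 2) ^ n) (k : Fin n) :
    |x k| ≤ c * (1 / 2) ^ ((k : ℕ) + 1) := by
  induction k using WellFoundedGT.induction with
  | _ k ih =>
  have hc0 : 0 ≤ c := nonneg_of_mul_nonneg_left ((norm_nonneg _).trans hc) (by positivity)
  set tail := ∑ j ∈ Ioi k, V k j * x j
  have htail : |tail| ≤ 1 / 2 * (c * ((1 / 2) ^ ((k : ℕ) + 1) - (1 / 2) ^ n)) :=
    calc |tail| ≤ ∑ j ∈ Ioi k, |V k j| * |x j| := by
          simpa only [abs_mul] using abs_sum_le_sum_abs (fun j ↦ V k j * x j) (Ioi k)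
      _ ≤ ∑ j ∈ Ioi k, 1 / 2 * (c * (1 / 2) ^ ((j : ℕ) + 1)) := by
          gcongr with j hj
          · exact hoff k j (mem_Ioi.mp hj)
          · exact ih j (mem_Ioi.mp hj)
      _ = _ := by rw [← mul_sum, ← mul_sum, Fin.sum_Ioi_half_pow_succ]
  have hentry : |x k| ≤ ‖V *ᵥ x‖ + |tail| := by
    have hsplit := mulVec_apply_eq_add_sum_Ioi (fun j hj ↦ hlower k j hj) (hdiag k) x
    have hy : |(V *ᵥ x) k| ≤ ‖V *ᵥ x‖ := by simpa using norm_le_pi_norm (V *ᵥ x) k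
    have := abs_sub (x k + tail) tail
    rw [add_sub_cancel_right, ← hsplit] at this
    linarith
  have hpow : c * (1 / 2 : ℝ) ^ n ≤ c * (1 / 2) ^ ((k : ℕ) + 1) :=
    mul_le_mul_of_nonneg_left (pow_le_pow_of_le_one (by norm_num) (by norm_num) k.isLt) hc0
  linarith

/-- **ℓ∞ lower bound for unit upper-triangular matrices with small entries.**
If `V` is upper triangular with unit diagonal and off-diagonal entries of absolute value
at most `1/2`, then `‖Vx‖∞ ≥ 2^{-n} ‖x‖₂` for every `x ∈ ℝⁿ`. (On `Fin n → ℝ` the default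
norm is the sup-norm, so `‖V.mulVec x‖` is `‖Vx‖∞`.) -/
theorem upper_triangular_sup_norm_bound (n : ℕ) (V : Matrix (Fin n) (Fin n) ℝ)
    (hlower : ∀ i j : Fin n, j < i → V i j = 0)
    (hdiag : ∀ i : Fin n, V i i = 1)
    (hoff : ∀ i j : Fin n, i < j → |V i j| ≤ 1 / 2) :
    ∀ x : Fin n → ℝ,
      (2 : ℝ) ^ (-(n : ℝ)) * Real.sqrt (∑ t, x t ^ 2) ≤ ‖V.mulVec x‖ := by
  intro x
  have hc : ‖V *ᵥ x‖ ≤ 2 ^ n * ‖V *ᵥ x‖ * (1 / 2) ^ n := by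
    rw [mul_right_comm, ← mul_pow]; norm_num
  rw [Real.rpow_neg zero_le_two, Real.rpow_natCast, inv_mul_le_iff₀ (by positivity)]
  exact sqrt_sum_sq_le_of_abs_le_half_pow (by positivity)
    (abs_le_of_norm_mulVec_le hlower hdiag hoff hc)
end
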